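/- arXiv:0901.0800 — 11 statements merged into one kernel-verified Lean document; each statement's English description precedes it below -/
import Mathlib

section
/- (Proposition 1) Let w = 0 and let (Σ₊, Σ_A, Σ_B, Σ_C, v₁, v₂, Ω₁, Ω₂) be a solution of the Bianchi type I two-fluid system on ℝ satisfying the Gauss constraint and the Codazzi constraint at every time, and such that Ω₁(τ) > 0, Ω₂(τ) > 0, v₁(τ)² < 1 and v₂(τ)² < 1 for all τ. Then as τ → ∞ one has q(τ) → 1/2, Ω₁(τ) + Ω₂(τ) → 1, v₁(τ) → 0, v₂(τ) → 0, and Σ₊(τ) → 0, Σ_A(τ) → 0, Σ_B(τ) → 0, Σ_C(τ) → 0; that is, the future asymptotic state is the flat Friedmann–Lemaître solution. -/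
open Filter Topology

noncomputable def Qflux (w Ω v : ℝ) : ℝ := (1 + w) * Ω * v / (1 + w * v ^ 2)

noncomputable def Pres (w Ω v : ℝ) : ℝ :=
  w * Ω + (1 / 3) * (1 - 3 * w) * Qflux w Ω v * v

noncomputable def Sig2 (Sp SA SB SC : ℝ) : ℝ := Sp ^ 2 + SA ^ 2 + SB ^ 2 + SC ^ 2

noncomputable def decel (w Sp SA SB SC v1 v2 O1 O2 : ℝ) : ℝ :=
  2 * Sig2 Sp SA SB SC + (1 / 2) * ((O1 + O2) + 3 * (Pres w O1 v1 + Pres w O2 v2))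

/-- A solution of the Bianchi type I two-fluid system with equation of state
parameter `w`: eight differentiable functions satisfying the evolution
equations, where `q` is the deceleration parameter. -/
structure BianchiSol (w : ℝ) where
  Sp : ℝ → ℝ
  SA : ℝ → ℝ
  SB : ℝ → ℝ
  SC : ℝ → ℝ
  v1 : ℝ → ℝ
  v2 : ℝ → ℝ
  O1 : ℝ → ℝ
  O2 : ℝ → ℝ
  q : ℝ → ℝ
  hq : ∀ τ : ℝ, q τ = decel w (Sp τ) (SA τ) (SB τ) (SC τ) (v1 τ) (v2 τ) (O1 τ) (O2 τ)
  hSp : ∀ τ : ℝ, HasDerivAt Sp (-(2 - q τ) * Sp τ + 3 * SA τ ^ 2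
      - Qflux w (O1 τ) (v1 τ) * v1 τ - Qflux w (O2 τ) (v2 τ) * v2 τ) τ
  hSA : ∀ τ : ℝ, HasDerivAt SA (-(2 - q τ + 3 * Sp τ + Real.sqrt 3 * SB τ) * SA τ) τ
  hSB : ∀ τ : ℝ, HasDerivAt SB (-(2 - q τ) * SB τ + Real.sqrt 3 * SA τ ^ 2
      - 2 * Real.sqrt 3 * SC τ ^ 2) τ
  hSC : ∀ τ : ℝ, HasDerivAt SC (-(2 - q τ - 2 * Real.sqrt 3 * SB τ) * SC τ) τ
  hv1 : ∀ τ : ℝ, HasDerivAt v1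
      ((1 - w * v1 τ ^ 2)⁻¹ * (1 - v1 τ ^ 2) * (3 * w - 1 + 2 * Sp τ) * v1 τ) τ
  hv2 : ∀ τ : ℝ, HasDerivAt v2
      ((1 - w * v2 τ ^ 2)⁻¹ * (1 - v2 τ ^ 2) * (3 * w - 1 + 2 * Sp τ) * v2 τ) τ
  hO1 : ∀ τ : ℝ, HasDerivAt O1 ((2 * q τ - 1 - 3 * w) * O1 τ
      + (3 * w - 1 + 2 * Sp τ) * Qflux w (O1 τ) (v1 τ) * v1 τ) τ
  hO2 : ∀ τ : ℝ, HasDerivAt O2 ((2 * q τ - 1 - 3 * w) * O2 τ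
      + (3 * w - 1 + 2 * Sp τ) * Qflux w (O2 τ) (v2 τ) * v2 τ) τ

lemma Qflux_zero (Ω v : ℝ) : Qflux 0 Ω v = Ω * v := by simp [Qflux]

lemma decel_zero (a b c d v1 v2 O1 O2 : ℝ) :
    decel 0 a b c d v1 v2 O1 O2
      = 2 * Sig2 a b c d + (1/2) * ((O1 + O2) + (O1 * v1^2 + O2 * v2^2)) := by
  simp only [decel, Pres, Qflux_zero]; ring

lemma prodIcc {x y X Y : ℝ} (hx : -X ≤ x) (hx' : x ≤ X) (hy : -Y ≤ y) (hy' : y ≤ Y) :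
    -(X*Y) ≤ x*y ∧ x*y ≤ X*Y := by
  constructor <;>
  nlinarith [mul_nonneg (by linarith : (0:ℝ) ≤ X - x) (by linarith : (0:ℝ) ≤ Y - y),
    mul_nonneg (by linarith : (0:ℝ) ≤ X + x) (by linarith : (0:ℝ) ≤ Y + y),
    mul_nonneg (by linarith : (0:ℝ) ≤ X - x) (by linarith : (0:ℝ) ≤ Y + y),
    mul_nonneg (by linarith : (0:ℝ) ≤ X + x) (by linarith : (0:ℝ) ≤ Y - y)]

lemma sqrtfac_deriv (v O q Sp : ℝ → ℝ) (τ : ℝ) (hv : v τ ^ 2 < 1)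
    (hdv : HasDerivAt v ((1 - (0:ℝ) * v τ ^ 2)⁻¹ * (1 - v τ ^ 2) * (3 * 0 - 1 + 2 * Sp τ) * v τ) τ)
    (hdO : HasDerivAt O ((2 * q τ - 1 - 3 * 0) * O τ
      + (3 * 0 - 1 + 2 * Sp τ) * Qflux 0 (O τ) (v τ) * v τ) τ) :
    HasDerivAt (fun t => O t * Real.sqrt (1 - v t ^ 2))
      ((2 * q τ - 1) * (O τ * Real.sqrt (1 - v τ ^ 2))) τ := by
  have h1 : (0:ℝ) < 1 - v τ ^ 2 := by linarith
  have hinner : HasDerivAt (fun t => 1 - v t ^ 2)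
      (-(2 * v τ * ((1 - (0:ℝ) * v τ ^ 2)⁻¹ * (1 - v τ ^ 2) * (3 * 0 - 1 + 2 * Sp τ) * v τ))) τ := by
    have := (hdv.pow 2)
    have h := (hasDerivAt_const τ (1:ℝ)).sub this
    refine h.congr_deriv (Eq.symm ?_)
    ring
  have hsq : HasDerivAt (fun t => Real.sqrt (1 - v t ^ 2))
      (1 / (2 * Real.sqrt (1 - v τ ^ 2)) *
        (-(2 * v τ * ((1 - (0:ℝ) * v τ ^ 2)⁻¹ * (1 - v τ ^ 2) * (3 * 0 - 1 + 2 * Sp τ) * v τ)))) τ :=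
    (Real.hasDerivAt_sqrt (ne_of_gt h1)).comp τ hinner
  have h := hdO.mul hsq
  refine h.congr_deriv (Eq.symm ?_)
  have hs : Real.sqrt (1 - v τ ^ 2) ^ 2 = 1 - v τ ^ 2 := Real.sq_sqrt h1.le
  have hspos : 0 < Real.sqrt (1 - v τ ^ 2) := Real.sqrt_pos.mpr h1
  rw [Qflux_zero]
  set s := Real.sqrt (1 - v τ ^ 2)
  field_simp
  linear_combination (O τ * v τ ^ 2 * (1 - 2 * Sp τ)) * hs

lemma absle1 {a : ℝ} (h : a^2 ≤ 1) : -1 ≤ a ∧ a ≤ 1 :=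
  ⟨by nlinarith [sq_nonneg (a+1)], by nlinarith [sq_nonneg (a-1)]⟩

set_option maxHeartbeats 1000000 in
lemma deriv_bound (a b c d u v o p Q r : ℝ)
    (hs : a^2 + b^2 + c^2 + d^2 ≤ 1)
    (hu : u^2 < 1) (hv : v^2 < 1) (ho : 0 < o) (hp : 0 < p) (hop : o + p ≤ 1)
    (hQ1 : 0 ≤ Q - 1/2) (hQ2 : Q - 1/2 ≤ 2) (hr0 : 0 ≤ r) (hr2 : r ≤ 2) :
    abs (2 * (2 * a * ((Q - 2) * a + 3 * b ^ 2 - o * u * u - p * v * v) +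
            2 * b * ((-(r * c) + (-(3 * a) + (Q - 2))) * b) +
          2 * c * ((Q - 2) * c + r * b ^ 2 - 2 * r * d ^ 2) +
        2 * d * ((2 * r * c - (2 - Q)) * d)) +
      1 / 2 *
        ((2 * Q - 1) * o + (-1 + 2 * a) * (o * u) * u +
            ((2 * Q - 1) * p + (-1 + 2 * a) * (p * v) * v) +
          (((2 * Q - 1) * o + (-1 + 2 * a) * (o * u) * u) * u ^ 2 +
              o * (2 * u * ((1 - u ^ 2) * (-1 + 2 * a) * u)) +
            (((2 * Q - 1) * p + (-1 + 2 * a) * (p * v) * v) * v ^ 2 +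
              p * (2 * v * ((1 - v ^ 2) * (-1 + 2 * a) * v)))))) ≤ 200 := by
  obtain ⟨ha1, ha2⟩ := absle1 (by linarith [sq_nonneg b, sq_nonneg c, sq_nonneg d] : a^2 ≤ 1)
  obtain ⟨hb1, hb2⟩ := absle1 (by linarith [sq_nonneg a, sq_nonneg c, sq_nonneg d] : b^2 ≤ 1)
  obtain ⟨hc1, hc2⟩ := absle1 (by linarith [sq_nonneg a, sq_nonneg b, sq_nonneg d] : c^2 ≤ 1)
  obtain ⟨hd1, hd2⟩ := absle1 (by linarith [sq_nonneg a, sq_nonneg b, sq_nonneg c] : d^2 ≤ 1)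
  obtain ⟨hu1, hu2⟩ := absle1 hu.le
  obtain ⟨hv1, hv2⟩ := absle1 hv.le
  have ho1 : -1 ≤ o := by linarith
  have ho2 : o ≤ 1 := by linarith
  have hp1 : -1 ≤ p := by linarith
  have hp2 : p ≤ 1 := by linarith
  have hr1 : -2 ≤ r := by linarith
  have hbsq0 : (0:ℝ) ≤ b^2 := sq_nonneg b
  have hbsq1 : b^2 ≤ 1 := by linarith [sq_nonneg a, sq_nonneg c, sq_nonneg d]
  have hdsq0 : (0:ℝ) ≤ d^2 := sq_nonneg d
  have hdsq1 : d^2 ≤ 1 := by linarith [sq_nonneg a, sq_nonneg b, sq_nonneg c]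
  have husq0 : (0:ℝ) ≤ u^2 := sq_nonneg u
  have hvsq0 : (0:ℝ) ≤ v^2 := sq_nonneg v
  -- products
  obtain ⟨hou1, hou2⟩ := prodIcc ho1 ho2 hu1 hu2
  obtain ⟨houu1, houu2⟩ := prodIcc hou1 hou2 hu1 hu2
  obtain ⟨hpv1, hpv2⟩ := prodIcc hp1 hp2 hv1 hv2
  obtain ⟨hpvv1, hpvv2⟩ := prodIcc hpv1 hpv2 hv1 hv2
  obtain ⟨hQa1, hQa2⟩ := prodIcc (by linarith : -(3/2 : ℝ) ≤ Q - 2) (by linarith : Q - 2 ≤ 3/2) ha1 ha2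
  have hB1a : -(7:ℝ) ≤ (Q - 2) * a + 3 * b ^ 2 - o * u * u - p * v * v := by linarith
  have hB1b : (Q - 2) * a + 3 * b ^ 2 - o * u * u - p * v * v ≤ 7 := by linarith
  obtain ⟨haB1, haB2⟩ := prodIcc ha1 ha2 hB1a hB1b
  obtain ⟨hrc1, hrc2⟩ := prodIcc hr1 hr2 hc1 hc2
  have hT2a : -(7:ℝ) ≤ -(r * c) + (-(3 * a) + (Q - 2)) := by linarith
  have hT2b : -(r * c) + (-(3 * a) + (Q - 2)) ≤ 7 := by linarith
  obtain ⟨hT2b1, hT2b2⟩ := prodIcc hT2a hT2b hb1 hb2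
  obtain ⟨hbB1, hbB2⟩ := prodIcc hb1 hb2 hT2b1 hT2b2
  obtain ⟨hQc1, hQc2⟩ := prodIcc (by linarith : -(3/2 : ℝ) ≤ Q - 2) (by linarith : Q - 2 ≤ 3/2) hc1 hc2
  obtain ⟨hrb1, hrb2⟩ := prodIcc hr1 hr2 (by linarith : -(1:ℝ) ≤ b^2) (by linarith : b^2 ≤ 1)
  obtain ⟨hrd1, hrd2⟩ := prodIcc hr1 hr2 (by linarith : -(1:ℝ) ≤ d^2) (by linarith : d^2 ≤ 1)
  have hB3a : -(8:ℝ) ≤ (Q - 2) * c + r * b ^ 2 - 2 * r * d ^ 2 := by linarith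
  have hB3b : (Q - 2) * c + r * b ^ 2 - 2 * r * d ^ 2 ≤ 8 := by linarith
  obtain ⟨hcB1, hcB2⟩ := prodIcc hc1 hc2 hB3a hB3b
  have hT4a : -(6:ℝ) ≤ 2 * r * c - (2 - Q) := by linarith
  have hT4b : 2 * r * c - (2 - Q) ≤ 6 := by linarith
  obtain ⟨hT4d1, hT4d2⟩ := prodIcc hT4a hT4b hd1 hd2
  obtain ⟨hdB1, hdB2⟩ := prodIcc hd1 hd2 hT4d1 hT4d2
  -- second bracket
  obtain ⟨hQo1, hQo2⟩ := prodIcc (by linarith : -(4:ℝ) ≤ 2*Q - 1) (by linarith : 2*Q - 1 ≤ 4) ho1 ho2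
  obtain ⟨hQp1, hQp2⟩ := prodIcc (by linarith : -(4:ℝ) ≤ 2*Q - 1) (by linarith : 2*Q - 1 ≤ 4) hp1 hp2
  obtain ⟨haou1, haou2⟩ := prodIcc (by linarith : -(3:ℝ) ≤ -1 + 2*a) (by linarith : -1 + 2*a ≤ 3) hou1 hou2
  obtain ⟨haouu1, haouu2⟩ := prodIcc haou1 haou2 hu1 hu2
  obtain ⟨hapv1, hapv2⟩ := prodIcc (by linarith : -(3:ℝ) ≤ -1 + 2*a) (by linarith : -1 + 2*a ≤ 3) hpv1 hpv2
  obtain ⟨hapvv1, hapvv2⟩ := prodIcc hapv1 hapv2 hv1 hv2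
  have hD1a : -(7:ℝ) ≤ (2 * Q - 1) * o + (-1 + 2 * a) * (o * u) * u := by linarith
  have hD1b : (2 * Q - 1) * o + (-1 + 2 * a) * (o * u) * u ≤ 7 := by linarith
  have hD2a : -(7:ℝ) ≤ (2 * Q - 1) * p + (-1 + 2 * a) * (p * v) * v := by linarith
  have hD2b : (2 * Q - 1) * p + (-1 + 2 * a) * (p * v) * v ≤ 7 := by linarith
  obtain ⟨hD1u1, hD1u2⟩ := prodIcc hD1a hD1b (by linarith : -(1:ℝ) ≤ u^2) (by linarith : u^2 ≤ 1)
  obtain ⟨hD2v1, hD2v2⟩ := prodIcc hD2a hD2b (by linarith : -(1:ℝ) ≤ v^2) (by linarith : v^2 ≤ 1)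
  -- E terms
  obtain ⟨hEa1, hEa2⟩ := prodIcc (by linarith : -(1:ℝ) ≤ 1 - u^2) (by linarith : 1 - u^2 ≤ 1) (by linarith : -(3:ℝ) ≤ -1 + 2*a) (by linarith : -1 + 2*a ≤ 3)
  obtain ⟨hEu1, hEu2⟩ := prodIcc hEa1 hEa2 hu1 hu2
  obtain ⟨hEuu1, hEuu2⟩ := prodIcc hu1 hu2 hEu1 hEu2
  obtain ⟨hoE1, hoE2⟩ := prodIcc ho1 ho2 (by linarith : -(6:ℝ) ≤ 2 * (u * ((1 - u^2) * (-1 + 2*a) * u))) (by linarith : 2 * (u * ((1 - u^2) * (-1 + 2*a) * u)) ≤ 6)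
  obtain ⟨hFa1, hFa2⟩ := prodIcc (by linarith : -(1:ℝ) ≤ 1 - v^2) (by linarith : 1 - v^2 ≤ 1) (by linarith : -(3:ℝ) ≤ -1 + 2*a) (by linarith : -1 + 2*a ≤ 3)
  obtain ⟨hFv1, hFv2⟩ := prodIcc hFa1 hFa2 hv1 hv2
  obtain ⟨hFvv1, hFvv2⟩ := prodIcc hv1 hv2 hFv1 hFv2
  obtain ⟨hpF1, hpF2⟩ := prodIcc hp1 hp2 (by linarith : -(6:ℝ) ≤ 2 * (v * ((1 - v^2) * (-1 + 2*a) * v))) (by linarith : 2 * (v * ((1 - v^2) * (-1 + 2*a) * v)) ≤ 6)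
  have hrw : 2 * (2 * a * ((Q - 2) * a + 3 * b ^ 2 - o * u * u - p * v * v) +
            2 * b * ((-(r * c) + (-(3 * a) + (Q - 2))) * b) +
          2 * c * ((Q - 2) * c + r * b ^ 2 - 2 * r * d ^ 2) +
        2 * d * ((2 * r * c - (2 - Q)) * d)) +
      1 / 2 *
        ((2 * Q - 1) * o + (-1 + 2 * a) * (o * u) * u +
            ((2 * Q - 1) * p + (-1 + 2 * a) * (p * v) * v) +
          (((2 * Q - 1) * o + (-1 + 2 * a) * (o * u) * u) * u ^ 2 +
              o * (2 * u * ((1 - u ^ 2) * (-1 + 2 * a) * u)) +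
            (((2 * Q - 1) * p + (-1 + 2 * a) * (p * v) * v) * v ^ 2 +
              p * (2 * v * ((1 - v ^ 2) * (-1 + 2 * a) * v)))))
      = 4 * (a * ((Q - 2) * a + 3 * b ^ 2 - o * u * u - p * v * v))
        + 4 * (b * ((-(r * c) + (-(3 * a) + (Q - 2))) * b))
        + 4 * (c * ((Q - 2) * c + r * b ^ 2 - 2 * r * d ^ 2))
        + 4 * (d * ((2 * r * c - (2 - Q)) * d))
        + 1/2 * ((2 * Q - 1) * o + (-1 + 2 * a) * (o * u) * u)
        + 1/2 * ((2 * Q - 1) * p + (-1 + 2 * a) * (p * v) * v)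
        + 1/2 * (((2 * Q - 1) * o + (-1 + 2 * a) * (o * u) * u) * u ^ 2)
        + 1/2 * (o * (2 * (u * ((1 - u ^ 2) * (-1 + 2 * a) * u))))
        + 1/2 * (((2 * Q - 1) * p + (-1 + 2 * a) * (p * v) * v) * v ^ 2)
        + 1/2 * (p * (2 * (v * ((1 - v ^ 2) * (-1 + 2 * a) * v)))) := by ring
  rw [hrw, abs_le]
  constructor <;>
  · generalize a * ((Q - 2) * a + 3 * b ^ 2 - o * u * u - p * v * v) = X1 at haB1 haB2 ⊢
    generalize b * ((-(r * c) + (-(3 * a) + (Q - 2))) * b) = X2 at hbB1 hbB2 ⊢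
    generalize c * ((Q - 2) * c + r * b ^ 2 - 2 * r * d ^ 2) = X3 at hcB1 hcB2 ⊢
    generalize d * ((2 * r * c - (2 - Q)) * d) = X4 at hdB1 hdB2 ⊢
    generalize ((2 * Q - 1) * o + (-1 + 2 * a) * (o * u) * u) * u ^ 2 = X5 at hD1u1 hD1u2 ⊢
    generalize ((2 * Q - 1) * p + (-1 + 2 * a) * (p * v) * v) * v ^ 2 = X6 at hD2v1 hD2v2 ⊢
    generalize (2 * Q - 1) * o + (-1 + 2 * a) * (o * u) * u = X7 at hD1a hD1b ⊢
    generalize (2 * Q - 1) * p + (-1 + 2 * a) * (p * v) * v = X8 at hD2a hD2b ⊢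
    generalize o * (2 * (u * ((1 - u ^ 2) * (-1 + 2 * a) * u))) = X9 at hoE1 hoE2 ⊢
    generalize p * (2 * (v * ((1 - v ^ 2) * (-1 + 2 * a) * v))) = X10 at hpF1 hpF2 ⊢
    linarith only [haB1, haB2, hbB1, hbB2, hcB1, hcB2, hdB1, hdB2, hD1a, hD1b, hD2a, hD2b,
      hD1u1, hD1u2, hD2v1, hD2v2, hoE1, hoE2, hpF1, hpF2]

/-- Proposition 1: for dust (w = 0), every solution of the Bianchi type I
two-fluid system satisfying the Gauss and Codazzi constraints, with positive
energy densities and subluminal tilts, isotropizes to the future: its future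
asymptotic state is the flat Friedmann–Lemaître solution. -/
theorem stmt_0 (S : BianchiSol 0)
    (hGauss : ∀ τ : ℝ, 1 - Sig2 (S.Sp τ) (S.SA τ) (S.SB τ) (S.SC τ) - S.O1 τ - S.O2 τ = 0)
    (hCodazzi : ∀ τ : ℝ, Qflux 0 (S.O1 τ) (S.v1 τ) + Qflux 0 (S.O2 τ) (S.v2 τ) = 0)
    (hO1 : ∀ τ : ℝ, 0 < S.O1 τ) (hO2 : ∀ τ : ℝ, 0 < S.O2 τ)
    (hv1 : ∀ τ : ℝ, S.v1 τ ^ 2 < 1) (hv2 : ∀ τ : ℝ, S.v2 τ ^ 2 < 1) :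
    Tendsto S.q atTop (𝓝 (1 / 2)) ∧
    Tendsto (fun τ => S.O1 τ + S.O2 τ) atTop (𝓝 1) ∧
    Tendsto S.v1 atTop (𝓝 0) ∧ Tendsto S.v2 atTop (𝓝 0) ∧
    Tendsto S.Sp atTop (𝓝 0) ∧ Tendsto S.SA atTop (𝓝 0) ∧
    Tendsto S.SB atTop (𝓝 0) ∧ Tendsto S.SC atTop (𝓝 0) := by
  -- key algebraic identity: q - 1/2 = (3/2) Σ² + (1/2) M
  have key : ∀ τ : ℝ, S.q τ - 1/2
      = (3/2) * Sig2 (S.Sp τ) (S.SA τ) (S.SB τ) (S.SC τ)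
        + (1/2) * (S.O1 τ * S.v1 τ ^ 2 + S.O2 τ * S.v2 τ ^ 2) := by
    intro τ
    have h1 := S.hq τ
    rw [decel_zero] at h1
    have h2 := hGauss τ
    linarith
  have hSig_nonneg : ∀ τ : ℝ, 0 ≤ Sig2 (S.Sp τ) (S.SA τ) (S.SB τ) (S.SC τ) := by
    intro τ; unfold Sig2; positivity
  have hSig_le : ∀ τ : ℝ, Sig2 (S.Sp τ) (S.SA τ) (S.SB τ) (S.SC τ) ≤ 1 := by
    intro τ; have := hGauss τ; have := hO1 τ; have := hO2 τ; linarith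
  have hM_nonneg : ∀ τ : ℝ, 0 ≤ S.O1 τ * S.v1 τ ^ 2 + S.O2 τ * S.v2 τ ^ 2 := by
    intro τ; have := (hO1 τ).le; have := (hO2 τ).le; positivity
  have hM_le : ∀ τ : ℝ, S.O1 τ * S.v1 τ ^ 2 + S.O2 τ * S.v2 τ ^ 2 ≤ S.O1 τ + S.O2 τ := by
    intro τ
    have h1 : S.O1 τ * S.v1 τ ^ 2 ≤ S.O1 τ := by nlinarith [hO1 τ, hv1 τ]
    have h2 : S.O2 τ * S.v2 τ ^ 2 ≤ S.O2 τ := by nlinarith [hO2 τ, hv2 τ]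
    linarith
  have hOm_le : ∀ τ : ℝ, S.O1 τ + S.O2 τ ≤ 1 := by
    intro τ; have := hGauss τ; have := hSig_nonneg τ; linarith
  have hf_nonneg : ∀ τ : ℝ, 0 ≤ S.q τ - 1/2 := by
    intro τ; have := key τ; have := hSig_nonneg τ; have := hM_nonneg τ; linarith
  have hf_le : ∀ τ : ℝ, S.q τ - 1/2 ≤ 2 := by
    intro τ
    have := key τ; have := hSig_le τ; have := hM_le τ; have := hOm_le τ; linarith
  -- the monotone quantities g1, g2
  set g1 : ℝ → ℝ := fun t => S.O1 t * Real.sqrt (1 - S.v1 t ^ 2) with hg1def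
  set g2 : ℝ → ℝ := fun t => S.O2 t * Real.sqrt (1 - S.v2 t ^ 2) with hg2def
  have hg1d : ∀ τ : ℝ, HasDerivAt g1 ((2 * S.q τ - 1) * g1 τ) τ :=
    fun τ => sqrtfac_deriv S.v1 S.O1 S.q S.Sp τ (hv1 τ) (S.hv1 τ) (S.hO1 τ)
  have hg2d : ∀ τ : ℝ, HasDerivAt g2 ((2 * S.q τ - 1) * g2 τ) τ :=
    fun τ => sqrtfac_deriv S.v2 S.O2 S.q S.Sp τ (hv2 τ) (S.hv2 τ) (S.hO2 τ)
  have hg1pos : ∀ τ : ℝ, 0 < g1 τ := by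
    intro τ
    exact mul_pos (hO1 τ) (Real.sqrt_pos.mpr (by linarith [hv1 τ]))
  have hg2pos : ∀ τ : ℝ, 0 < g2 τ := by
    intro τ
    exact mul_pos (hO2 τ) (Real.sqrt_pos.mpr (by linarith [hv2 τ]))
  have hg1le : ∀ τ : ℝ, g1 τ ≤ 1 := by
    intro τ
    have h1 : Real.sqrt (1 - S.v1 τ ^ 2) ≤ 1 :=
      Real.sqrt_le_one.mpr (by nlinarith [sq_nonneg (S.v1 τ)])
    have h2 : S.O1 τ ≤ 1 := by have := hOm_le τ; have := hO2 τ; linarith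
    calc S.O1 τ * Real.sqrt (1 - S.v1 τ ^ 2) ≤ 1 * 1 :=
          mul_le_mul h2 h1 (Real.sqrt_nonneg _) (by norm_num)
      _ = 1 := by norm_num
  have hg2le : ∀ τ : ℝ, g2 τ ≤ 1 := by
    intro τ
    have h1 : Real.sqrt (1 - S.v2 τ ^ 2) ≤ 1 :=
      Real.sqrt_le_one.mpr (by nlinarith [sq_nonneg (S.v2 τ)])
    have h2 : S.O2 τ ≤ 1 := by have := hOm_le τ; have := hO1 τ; linarith
    calc S.O2 τ * Real.sqrt (1 - S.v2 τ ^ 2) ≤ 1 * 1 :=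
          mul_le_mul h2 h1 (Real.sqrt_nonneg _) (by norm_num)
      _ = 1 := by norm_num
  have hg1mono : Monotone g1 :=
    monotone_of_hasDerivAt_nonneg hg1d (fun τ =>
      mul_nonneg (by linarith [hf_nonneg τ]) (hg1pos τ).le)
  have hg2mono : Monotone g2 :=
    monotone_of_hasDerivAt_nonneg hg2d (fun τ =>
      mul_nonneg (by linarith [hf_nonneg τ]) (hg2pos τ).le)
  set g : ℝ → ℝ := fun t => g1 t + g2 t with hgdef
  have hgd : ∀ τ : ℝ, HasDerivAt g ((2 * S.q τ - 1) * g τ) τ := by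
    intro τ
    have := (hg1d τ).add (hg2d τ)
    refine this.congr_deriv (Eq.symm ?_)
    simp [hgdef]; ring
  have hgmono : Monotone g := fun a b hab => add_le_add (hg1mono hab) (hg2mono hab)
  have hgle : ∀ τ : ℝ, g τ ≤ 2 := fun τ => by
    have := hg1le τ; have := hg2le τ; simp only [hgdef]; linarith
  have hgL : Tendsto g atTop (𝓝 (⨆ τ, g τ)) :=
    tendsto_atTop_ciSup hgmono ⟨2, by rintro x ⟨τ, rfl⟩; exact hgle τ⟩
  -- Lipschitz bound on q
  have hsqrt3 : Real.sqrt 3 ≤ 2 := by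
    nlinarith [Real.sq_sqrt (by norm_num : (0:ℝ) ≤ 3), Real.sqrt_nonneg 3]
  have hqlip : ∀ x y : ℝ, |S.q y - S.q x| ≤ 200 * |y - x| := by
    have hqfun : S.q = fun τ => 2 * (S.Sp τ^2 + S.SA τ^2 + S.SB τ^2 + S.SC τ^2)
        + (1/2) * ((S.O1 τ + S.O2 τ) + (S.O1 τ * S.v1 τ^2 + S.O2 τ * S.v2 τ^2)) := by
      funext τ; rw [S.hq τ, decel_zero]; simp [Sig2]
    have hqd : ∀ x : ℝ, DifferentiableAt ℝ S.q x ∧ |deriv S.q x| ≤ 200 := by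
      intro x
      have hbig := (((((S.hSp x).pow 2).add ((S.hSA x).pow 2)).add
          ((S.hSB x).pow 2)).add ((S.hSC x).pow 2)).const_mul (2:ℝ) |>.add
        (((((S.hO1 x).add (S.hO2 x))).add
          (((S.hO1 x).mul ((S.hv1 x).pow 2)).add
            ((S.hO2 x).mul ((S.hv2 x).pow 2)))).const_mul ((1:ℝ)/2))
      replace hbig := hbig.congr_of_eventuallyEq (f₁ := S.q) (Eventually.of_forall fun y => by rw [hqfun]; simp)
      refine ⟨hbig.differentiableAt, ?_⟩
      rw [hbig.deriv]
      norm_num [Qflux_zero]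
      exact deriv_bound _ _ _ _ _ _ _ _ _ _
        (by have := hSig_le x; simpa [Sig2] using this)
        (hv1 x) (hv2 x) (hO1 x) (hO2 x) (hOm_le x) (hf_nonneg x) (hf_le x)
        (Real.sqrt_nonneg 3) hsqrt3
    intro x y
    have h := Convex.norm_image_sub_le_of_norm_hasDerivWithin_le
      (f' := fun z => deriv S.q z) (C := 200) (s := Set.univ)
      (fun z _ => ((hqd z).1.hasDerivAt.hasDerivWithinAt))
      (fun z _ => by rw [Real.norm_eq_abs]; exact (hqd z).2)
      convex_univ (Set.mem_univ x) (Set.mem_univ y)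
    simpa [Real.norm_eq_abs] using h
  -- q → 1/2
  have hflim : Tendsto (fun τ => S.q τ - 1/2) atTop (𝓝 0) := by
    rw [Metric.tendsto_atTop]
    intro ε hε
    by_contra hcon
    push_neg at hcon
    have hc0pos : 0 < g 0 := by
      have := hg1pos 0; have := hg2pos 0; simp only [hgdef]; linarith
    have hδpos : 0 < ε / 400 := by positivity
    rw [Metric.tendsto_atTop] at hgL
    obtain ⟨T, hT⟩ := hgL (ε * g 0 * (ε / 400) / 2) (by positivity)
    obtain ⟨τ, hτT, hτε⟩ := hcon (max T 0)
    have hτ0 : (0:ℝ) ≤ τ := le_trans (le_max_right T 0) hτT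
    have hτT' : T ≤ τ := le_trans (le_max_left T 0) hτT
    have hfτ : ε ≤ S.q τ - 1/2 := by
      rw [Real.dist_eq, sub_zero, abs_of_nonneg (hf_nonneg τ)] at hτε
      exact hτε
    have hflow : ∀ t ∈ Set.Icc τ (τ + ε / 400), ε/2 ≤ S.q t - 1/2 := by
      intro t ht
      have h1 := hqlip τ t
      have h2 : |t - τ| ≤ ε / 400 := by
        rw [abs_of_nonneg (by linarith [ht.1])]; linarith [ht.2]
      have h3 : |S.q t - S.q τ| ≤ 200 * (ε / 400) := le_trans h1 (by nlinarith)
      have h4 := (abs_le.mp h3).1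
      linarith
    have hder : ∀ t : ℝ, HasDerivAt (fun s => g s - ε * g 0 * s)
        ((2 * S.q t - 1) * g t - ε * g 0) t := by
      intro t
      have := (hgd t).sub ((hasDerivAt_id t).const_mul (ε * g 0))
      refine this.congr_deriv (Eq.symm ?_)
      ring
    have hgrow : g τ + ε * g 0 * (ε / 400) ≤ g (τ + ε / 400) := by
      have hmono : MonotoneOn (fun s => g s - ε * g 0 * s) (Set.Icc τ (τ + ε / 400)) := by
        apply monotoneOn_of_hasDerivWithinAt_nonneg (convex_Icc _ _)
          (f' := fun t => (2 * S.q t - 1) * g t - ε * g 0)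
        · exact fun t _ => (hder t).continuousAt.continuousWithinAt
        · exact fun t _ => (hder t).hasDerivWithinAt
        · intro t ht
          rw [interior_Icc] at ht
          have hf2 : ε/2 ≤ S.q t - 1/2 := hflow t ⟨ht.1.le, ht.2.le⟩
          have hgt : g 0 ≤ g t := hgmono (by linarith [ht.1])
          nlinarith [mul_nonneg (by linarith : (0:ℝ) ≤ 2 * S.q t - 1 - ε)
            (by linarith : (0:ℝ) ≤ g t - g 0), hc0pos, hε]
      have h5 := hmono (Set.left_mem_Icc.mpr (by linarith))
        (Set.right_mem_Icc.mpr (by linarith)) (by linarith)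
      simp only at h5
      linarith
    have h6 := hT τ hτT'
    have h7 := hT (τ + ε / 400) (by linarith)
    rw [Real.dist_eq] at h6 h7
    have h8 := abs_lt.mp h6
    have h9 := abs_lt.mp h7
    linarith [h8.1, h8.2, h9.1, h9.2]
  -- conclusions
  have hqlim : Tendsto S.q atTop (𝓝 (1/2)) := by
    have h := hflim.add_const (1/2)
    rw [zero_add] at h
    have heq : (fun τ => (S.q τ - 1/2) + 1/2) = S.q := by funext τ; ring
    rwa [heq] at h
  have hup : Tendsto (fun τ => (2/3 : ℝ) * (S.q τ - 1/2)) atTop (𝓝 0) := by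
    simpa using hflim.const_mul (2/3 : ℝ)
  have hSiglim : Tendsto (fun τ => Sig2 (S.Sp τ) (S.SA τ) (S.SB τ) (S.SC τ)) atTop (𝓝 0) :=
    tendsto_of_tendsto_of_tendsto_of_le_of_le tendsto_const_nhds hup
      (fun τ => hSig_nonneg τ)
      (fun τ => by have := key τ; have := hM_nonneg τ; linarith)
  have hOmlim : Tendsto (fun τ => S.O1 τ + S.O2 τ) atTop (𝓝 1) := by
    have h1 : Tendsto (fun τ => 1 - Sig2 (S.Sp τ) (S.SA τ) (S.SB τ) (S.SC τ)) atTop (𝓝 1) := by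
      simpa using tendsto_const_nhds.sub hSiglim
    have heq : (fun τ => S.O1 τ + S.O2 τ)
        = (fun τ => 1 - Sig2 (S.Sp τ) (S.SA τ) (S.SB τ) (S.SC τ)) := by
      funext τ; have := hGauss τ; linarith
    rwa [heq]
  have hMup : Tendsto (fun τ => (2 : ℝ) * (S.q τ - 1/2)) atTop (𝓝 0) := by
    simpa using hflim.const_mul (2 : ℝ)
  have hMlim : Tendsto (fun τ => S.O1 τ * S.v1 τ ^ 2 + S.O2 τ * S.v2 τ ^ 2) atTop (𝓝 0) :=
    tendsto_of_tendsto_of_tendsto_of_le_of_le tendsto_const_nhds hMup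
      (fun τ => hM_nonneg τ)
      (fun τ => by have := key τ; have := hSig_nonneg τ; linarith)
  have sqz : ∀ h : ℝ → ℝ, Tendsto (fun τ => h τ ^ 2) atTop (𝓝 0) → Tendsto h atTop (𝓝 0) := by
    intro h hh
    rw [tendsto_zero_iff_abs_tendsto_zero]
    have habs : Tendsto (fun τ => Real.sqrt (h τ ^ 2)) atTop (𝓝 0) := by
      have := (Real.continuous_sqrt.tendsto 0).comp hh
      simpa [Function.comp_def] using this
    simpa [Function.comp_def, Real.sqrt_sq_eq_abs] using habs
  have compsq : ∀ h : ℝ → ℝ, (∀ τ, h τ ^ 2 ≤ Sig2 (S.Sp τ) (S.SA τ) (S.SB τ) (S.SC τ)) →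
      Tendsto h atTop (𝓝 0) := by
    intro h hle
    exact sqz h (tendsto_of_tendsto_of_tendsto_of_le_of_le tendsto_const_nhds hSiglim
      (fun τ => sq_nonneg _) (fun τ => hle τ))
  have hSplim : Tendsto S.Sp atTop (𝓝 0) := compsq S.Sp (fun τ => by
    unfold Sig2; nlinarith [sq_nonneg (S.SA τ), sq_nonneg (S.SB τ), sq_nonneg (S.SC τ)])
  have hSAlim : Tendsto S.SA atTop (𝓝 0) := compsq S.SA (fun τ => by
    unfold Sig2; nlinarith [sq_nonneg (S.Sp τ), sq_nonneg (S.SB τ), sq_nonneg (S.SC τ)])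
  have hSBlim : Tendsto S.SB atTop (𝓝 0) := compsq S.SB (fun τ => by
    unfold Sig2; nlinarith [sq_nonneg (S.Sp τ), sq_nonneg (S.SA τ), sq_nonneg (S.SC τ)])
  have hSClim : Tendsto S.SC atTop (𝓝 0) := compsq S.SC (fun τ => by
    unfold Sig2; nlinarith [sq_nonneg (S.Sp τ), sq_nonneg (S.SA τ), sq_nonneg (S.SB τ)])
  -- tilt limits
  have hv1lim : Tendsto S.v1 atTop (𝓝 0) := by
    apply sqz
    have hupM : Tendsto (fun τ => (g1 0)⁻¹ * (S.O1 τ * S.v1 τ ^ 2 + S.O2 τ * S.v2 τ ^ 2))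
        atTop (𝓝 0) := by simpa using hMlim.const_mul ((g1 0)⁻¹)
    apply tendsto_of_tendsto_of_tendsto_of_le_of_le' tendsto_const_nhds hupM
      (Eventually.of_forall (fun τ => sq_nonneg _))
    filter_upwards [eventually_ge_atTop (0:ℝ)] with τ hτ
    have hg10 : g1 0 ≤ S.O1 τ := by
      have h1 : g1 0 ≤ g1 τ := hg1mono hτ
      have h2 : g1 τ ≤ S.O1 τ := by
        simp only [hg1def]
        calc S.O1 τ * Real.sqrt (1 - S.v1 τ ^ 2) ≤ S.O1 τ * 1 :=
              mul_le_mul_of_nonneg_left (Real.sqrt_le_one.mpr (by nlinarith [sq_nonneg (S.v1 τ)]))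
                (hO1 τ).le
          _ = S.O1 τ := mul_one _
      linarith
    rw [inv_mul_eq_div, le_div_iff₀ (hg1pos 0)]
    nlinarith [sq_nonneg (S.v1 τ), sq_nonneg (S.v2 τ), (hO2 τ).le]
  have hv2lim : Tendsto S.v2 atTop (𝓝 0) := by
    apply sqz
    have hupM : Tendsto (fun τ => (g2 0)⁻¹ * (S.O1 τ * S.v1 τ ^ 2 + S.O2 τ * S.v2 τ ^ 2))
        atTop (𝓝 0) := by simpa using hMlim.const_mul ((g2 0)⁻¹)
    apply tendsto_of_tendsto_of_tendsto_of_le_of_le' tendsto_const_nhds hupM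
      (Eventually.of_forall (fun τ => sq_nonneg _))
    filter_upwards [eventually_ge_atTop (0:ℝ)] with τ hτ
    have hg20 : g2 0 ≤ S.O2 τ := by
      have h1 : g2 0 ≤ g2 τ := hg2mono hτ
      have h2 : g2 τ ≤ S.O2 τ := by
        simp only [hg2def]
        calc S.O2 τ * Real.sqrt (1 - S.v2 τ ^ 2) ≤ S.O2 τ * 1 :=
              mul_le_mul_of_nonneg_left (Real.sqrt_le_one.mpr (by nlinarith [sq_nonneg (S.v2 τ)]))
                (hO2 τ).le
          _ = S.O2 τ := mul_one _
      linarith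
    rw [inv_mul_eq_div, le_div_iff₀ (hg2pos 0)]
    nlinarith [sq_nonneg (S.v1 τ), sq_nonneg (S.v2 τ), (hO1 τ).le]
  exact ⟨hqlim, hOmlim, hv1lim, hv2lim, hSplim, hSAlim, hSBlim, hSClim⟩
end

section
/- Let w = 0 and let (Σ₊, Σ_A, Σ_B, Σ_C, v₁, v₂, Ω₁, Ω₂) be a solution of the Bianchi type I two-fluid system with Ωᵢ(τ) > 0 and vᵢ(τ)² < 1 for all τ (i = 1,2). Then for each i = 1,2 the identity d/dτ [ln((1 - vᵢ²)Ωᵢ²)] = 2(2q - 1) holds along the solution; in particular, if moreover the Gauss constraint holds and Ω₁, Ω₂ ≥ 0, then the function τ ↦ ln((1 - vᵢ(τ)²)Ωᵢ(τ)²) is nondecreasing. -/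
open Filter Topology

lemma log_deriv_aux {v O q Sp : ℝ → ℝ}
    (hv : ∀ τ : ℝ, HasDerivAt v ((1 - v τ ^ 2) * (-1 + 2 * Sp τ) * v τ) τ)
    (hO : ∀ τ : ℝ, HasDerivAt O
      ((2 * q τ - 1) * O τ + (-1 + 2 * Sp τ) * O τ * v τ ^ 2) τ)
    (hOpos : ∀ τ : ℝ, 0 < O τ) (hvsub : ∀ τ : ℝ, v τ ^ 2 < 1) (τ : ℝ) :
    HasDerivAt (fun t => Real.log ((1 - v t ^ 2) * O t ^ 2)) (2 * (2 * q τ - 1)) τ := by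
  have hg : HasDerivAt (fun t => (1 - v t ^ 2) * O t ^ 2)
      ((1 - v τ ^ 2) * O τ ^ 2 * (2 * (2 * q τ - 1))) τ := by
    have h1 : HasDerivAt (fun t => 1 - v t ^ 2)
        (-(2 * v τ * ((1 - v τ ^ 2) * (-1 + 2 * Sp τ) * v τ))) τ := by
      have := ((hv τ).pow 2).const_sub 1
      simpa using this.congr_deriv (by ring)
    have h2 : HasDerivAt (fun t => O t ^ 2)
        (2 * O τ * ((2 * q τ - 1) * O τ + (-1 + 2 * Sp τ) * O τ * v τ ^ 2)) τ := by
      simpa [pow_one] using (hO τ).fun_pow 2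
    have := h1.mul h2
    exact this.congr_deriv (by ring)
  have hne : (1 - v τ ^ 2) * O τ ^ 2 ≠ 0 := by
    have h1 : 0 < 1 - v τ ^ 2 := by nlinarith [hvsub τ]
    have h2 := hOpos τ; positivity
  have := hg.log hne
  refine this.congr_deriv ?_
  rw [mul_div_right_comm, div_self hne, one_mul]

/-- For dust (w = 0), along any solution with positive energy densities and
subluminal tilts, d/dτ [ln((1 - vᵢ²)Ωᵢ²)] = 2(2q - 1) for i = 1,2; and if
moreover the Gauss constraint holds and Ω₁, Ω₂ ≥ 0, then
τ ↦ ln((1 - vᵢ(τ)²)Ωᵢ(τ)²) is nondecreasing. -/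
theorem stmt_1 (S : BianchiSol 0)
    (hO1 : ∀ τ : ℝ, 0 < S.O1 τ) (hO2 : ∀ τ : ℝ, 0 < S.O2 τ)
    (hv1 : ∀ τ : ℝ, S.v1 τ ^ 2 < 1) (hv2 : ∀ τ : ℝ, S.v2 τ ^ 2 < 1) :
    (∀ τ : ℝ, HasDerivAt (fun t => Real.log ((1 - S.v1 t ^ 2) * S.O1 t ^ 2))
      (2 * (2 * S.q τ - 1)) τ) ∧
    (∀ τ : ℝ, HasDerivAt (fun t => Real.log ((1 - S.v2 t ^ 2) * S.O2 t ^ 2))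
      (2 * (2 * S.q τ - 1)) τ) ∧
    ((∀ τ : ℝ, 1 - Sig2 (S.Sp τ) (S.SA τ) (S.SB τ) (S.SC τ) - S.O1 τ - S.O2 τ = 0) →
     (∀ τ : ℝ, 0 ≤ S.O1 τ) → (∀ τ : ℝ, 0 ≤ S.O2 τ) →
      Monotone (fun t => Real.log ((1 - S.v1 t ^ 2) * S.O1 t ^ 2)) ∧
      Monotone (fun t => Real.log ((1 - S.v2 t ^ 2) * S.O2 t ^ 2))) := by
  have hv1' : ∀ τ : ℝ, HasDerivAt S.v1 ((1 - S.v1 τ ^ 2) * (-1 + 2 * S.Sp τ) * S.v1 τ) τ := by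
    intro τ
    have := S.hv1 τ
    convert this using 1; first | (norm_num; ring) | norm_num | ring
  have hv2' : ∀ τ : ℝ, HasDerivAt S.v2 ((1 - S.v2 τ ^ 2) * (-1 + 2 * S.Sp τ) * S.v2 τ) τ := by
    intro τ
    have := S.hv2 τ
    convert this using 1; first | (norm_num; ring) | norm_num | ring
  have hO1' : ∀ τ : ℝ, HasDerivAt S.O1
      ((2 * S.q τ - 1) * S.O1 τ + (-1 + 2 * S.Sp τ) * S.O1 τ * S.v1 τ ^ 2) τ := by
    intro τ
    have := S.hO1 τ
    convert this using 1; first | (simp [Qflux]; ring) | simp [Qflux] | ring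
  have hO2' : ∀ τ : ℝ, HasDerivAt S.O2
      ((2 * S.q τ - 1) * S.O2 τ + (-1 + 2 * S.Sp τ) * S.O2 τ * S.v2 τ ^ 2) τ := by
    intro τ
    have := S.hO2 τ
    convert this using 1; first | (simp [Qflux]; ring) | simp [Qflux] | ring
  have key1 := log_deriv_aux hv1' hO1' hO1 hv1
  have key2 := log_deriv_aux hv2' hO2' hO2 hv2
  refine ⟨key1, key2, fun hG hO1n hO2n => ?_⟩
  have hqpos : ∀ τ : ℝ, 0 ≤ 2 * (2 * S.q τ - 1) := by
    intro τ
    have hq := S.hq τ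
    have hg := hG τ
    have h1 := mul_nonneg (hO1n τ) (sq_nonneg (S.v1 τ))
    have h2 := mul_nonneg (hO2n τ) (sq_nonneg (S.v2 τ))
    have hs : 0 ≤ Sig2 (S.Sp τ) (S.SA τ) (S.SB τ) (S.SC τ) := by
      unfold Sig2; positivity
    simp only [decel, Pres, Qflux] at hq
    norm_num at hq
    nlinarith [hq, hg, h1, h2, hs]
  constructor
  · refine monotone_of_deriv_nonneg (fun τ => (key1 τ).differentiableAt) (fun τ => ?_)
    rw [(key1 τ).deriv]; exact hqpos τ
  · refine monotone_of_deriv_nonneg (fun τ => (key2 τ).differentiableAt) (fun τ => ?_)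
    rw [(key2 τ).deriv]; exact hqpos τ
end

section
/- Let 0 ≤ w < 1 and let Σ₊, Σ_A, Σ_B, Σ_C, v₁, v₂, Ω₁, Ω₂ be real numbers with Ω₁ ≥ 0, Ω₂ ≥ 0, v₁² ≤ 1, v₂² ≤ 1, satisfying the Gauss constraint 1 - Σ² - Ω₁ - Ω₂ = 0. Then the deceleration parameter satisfies 1/2 ≤ q ≤ 2, where q = 2Σ² + (1/2)(Ω_m + 3P_m). -/
open Filter Topology

lemma pres_bounds {w Ω v : ℝ} (hw0 : 0 ≤ w) (hw1 : w < 1) (hO : 0 ≤ Ω)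
    (hv : v ^ 2 ≤ 1) : 0 ≤ Pres w Ω v ∧ Pres w Ω v ≤ Ω := by
  have hv0 : 0 ≤ v ^ 2 := sq_nonneg v
  have hd : 0 < 1 + w * v ^ 2 := by nlinarith
  have hP : Pres w Ω v = (Ω * (3 * w + v ^ 2 * (1 - 2 * w))) / (3 * (1 + w * v ^ 2)) := by
    unfold Pres Qflux
    field_simp
    ring
  have hw1' : (0:ℝ) ≤ 1 - w := by linarith
  have hv1' : (0:ℝ) ≤ 1 - v ^ 2 := by linarith
  constructor
  · rw [hP]
    apply div_nonneg
    · nlinarith [mul_nonneg hO hw0, mul_nonneg hO hv0,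
        mul_nonneg (mul_nonneg hO hw0) hv1']
    · nlinarith
  · rw [hP, div_le_iff₀ (by nlinarith)]
    nlinarith [mul_nonneg (mul_nonneg hO hw1') hv1',
      mul_nonneg hO hw1', mul_nonneg (mul_nonneg hO hw0) hv0]

/-- For nonnegative energy densities, subluminal tilts and the Gauss constraint,
the deceleration parameter satisfies 1/2 ≤ q ≤ 2. -/
theorem stmt_2 {w Sp SA SB SC v1 v2 O1 O2 : ℝ} (hw0 : 0 ≤ w) (hw1 : w < 1)
    (hO1 : 0 ≤ O1) (hO2 : 0 ≤ O2) (hv1 : v1 ^ 2 ≤ 1) (hv2 : v2 ^ 2 ≤ 1)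
    (hGauss : 1 - Sig2 Sp SA SB SC - O1 - O2 = 0) :
    1 / 2 ≤ decel w Sp SA SB SC v1 v2 O1 O2 ∧ decel w Sp SA SB SC v1 v2 O1 O2 ≤ 2 := by
  obtain ⟨h1l, h1u⟩ := pres_bounds hw0 hw1 hO1 hv1
  obtain ⟨h2l, h2u⟩ := pres_bounds hw0 hw1 hO2 hv2
  have hS : 0 ≤ Sig2 Sp SA SB SC := by unfold Sig2; positivity
  unfold decel
  constructor <;> nlinarith
end

section
/- Let 0 ≤ w < 1 and let (Σ₊, Σ_A, Σ_B, Σ_C, v₁, v₂, Ω₁, Ω₂) be a solution of the Bianchi type I two-fluid system such that 0 < v₁(τ) < 1 and -1 < v₂(τ) < 0 for all τ. Then the function Φ(τ) = v₁(τ)²(1 - v₂(τ)²)^{1-w} / (v₂(τ)²(1 - v₁(τ)²)^{1-w}) is a constant of motion, i.e. Φ'(τ) = 0 for all τ, so Φ(τ) = k for some positive real constant k. -/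
open Filter Topology

/-- The quantity Φ = v₁²(1 - v₂²)^(1-w) / (v₂²(1 - v₁²)^(1-w)) is a constant
of motion of the Bianchi type I two-fluid system: its derivative vanishes along
any solution with 0 < v₁ < 1 and -1 < v₂ < 0, so it equals a positive constant k. -/
theorem stmt_3 {w : ℝ} (hw0 : 0 ≤ w) (hw1 : w < 1) (S : BianchiSol w)
    (hv1 : ∀ τ : ℝ, 0 < S.v1 τ ∧ S.v1 τ < 1)
    (hv2 : ∀ τ : ℝ, -1 < S.v2 τ ∧ S.v2 τ < 0) :
    (∀ τ : ℝ, HasDerivAt (fun t => S.v1 t ^ 2 * (1 - S.v2 t ^ 2) ^ (1 - w) /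
        (S.v2 t ^ 2 * (1 - S.v1 t ^ 2) ^ (1 - w))) 0 τ) ∧
    ∃ k : ℝ, 0 < k ∧ ∀ τ : ℝ, S.v1 τ ^ 2 * (1 - S.v2 τ ^ 2) ^ (1 - w) /
        (S.v2 τ ^ 2 * (1 - S.v1 τ ^ 2) ^ (1 - w)) = k := by
  have key : ∀ τ : ℝ, HasDerivAt (fun t => S.v1 t ^ 2 * (1 - S.v2 t ^ 2) ^ (1 - w) /
      (S.v2 t ^ 2 * (1 - S.v1 t ^ 2) ^ (1 - w))) 0 τ := by
    intro τ
    obtain ⟨ha0, ha1⟩ := hv1 τ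
    obtain ⟨hb0, hb1⟩ := hv2 τ
    have h1a : (0:ℝ) < 1 - S.v1 τ ^ 2 := by nlinarith
    have h1b : (0:ℝ) < 1 - S.v2 τ ^ 2 := by nlinarith
    have hwa : (0:ℝ) < 1 - w * S.v1 τ ^ 2 := by nlinarith
    have hwb : (0:ℝ) < 1 - w * S.v2 τ ^ 2 := by nlinarith
    have hA : (0:ℝ) < (1 - S.v1 τ ^ 2) ^ (1 - w) := Real.rpow_pos_of_pos h1a _
    have hB : (0:ℝ) < (1 - S.v2 τ ^ 2) ^ (1 - w) := Real.rpow_pos_of_pos h1b _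
    have dv1 := S.hv1 τ
    have dv2 := S.hv2 τ
    have d1 : HasDerivAt (fun t => 1 - S.v1 t ^ 2)
        (-(2 * S.v1 τ * ((1 - w * S.v1 τ ^ 2)⁻¹ * (1 - S.v1 τ ^ 2) * (3 * w - 1 + 2 * S.Sp τ) * S.v1 τ))) τ := by
      exact ((hasDerivAt_const τ (1:ℝ)).fun_sub (dv1.fun_pow 2)).congr_deriv (by norm_num)
    have d2 : HasDerivAt (fun t => 1 - S.v2 t ^ 2)
        (-(2 * S.v2 τ * ((1 - w * S.v2 τ ^ 2)⁻¹ * (1 - S.v2 τ ^ 2) * (3 * w - 1 + 2 * S.Sp τ) * S.v2 τ))) τ := by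
      exact ((hasDerivAt_const τ (1:ℝ)).fun_sub (dv2.fun_pow 2)).congr_deriv (by norm_num)
    have dA := d1.rpow_const (p := 1 - w) (Or.inl (ne_of_gt h1a))
    have dB := d2.rpow_const (p := 1 - w) (Or.inl (ne_of_gt h1b))
    have dN := (dv1.fun_pow 2).fun_mul dB
    have dD := (dv2.fun_pow 2).fun_mul dA
    have hb' : S.v2 τ ≠ 0 := ne_of_lt hb1
    have hDne : S.v2 τ ^ 2 * (1 - S.v1 τ ^ 2) ^ (1 - w) ≠ 0 :=
      ne_of_gt (mul_pos (pow_two_pos_of_ne_zero hb') hA)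
    have := dN.fun_div dD hDne
    refine this.congr_deriv ?_
    have epowa : (1 - S.v1 τ ^ 2) ^ (1 - w - 1) = (1 - S.v1 τ ^ 2) ^ (1 - w) / (1 - S.v1 τ ^ 2) := by
      rw [Real.rpow_sub h1a, Real.rpow_one]
    have epowb : (1 - S.v2 τ ^ 2) ^ (1 - w - 1) = (1 - S.v2 τ ^ 2) ^ (1 - w) / (1 - S.v2 τ ^ 2) := by
      rw [Real.rpow_sub h1b, Real.rpow_one]
    rw [epowa, epowb]
    have ha' : S.v1 τ ≠ 0 := ne_of_gt ha0
    field_simp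
    ring
  refine ⟨key, ?_⟩
  set Φ : ℝ → ℝ := fun t => S.v1 t ^ 2 * (1 - S.v2 t ^ 2) ^ (1 - w) /
      (S.v2 t ^ 2 * (1 - S.v1 t ^ 2) ^ (1 - w)) with hΦ
  have hconst : ∀ τ : ℝ, Φ τ = Φ 0 := by
    intro τ
    exact is_const_of_deriv_eq_zero (fun t => (key t).differentiableAt)
      (fun t => (key t).deriv) τ 0
  refine ⟨Φ 0, ?_, hconst⟩
  obtain ⟨ha0, ha1⟩ := hv1 0
  obtain ⟨hb0, hb1⟩ := hv2 0
  have h1a : (0:ℝ) < 1 - S.v1 0 ^ 2 := by nlinarith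
  have h1b : (0:ℝ) < 1 - S.v2 0 ^ 2 := by nlinarith
  have hb' : S.v2 0 ≠ 0 := ne_of_lt hb1
  exact div_pos (mul_pos (pow_two_pos_of_ne_zero (ne_of_gt ha0)) (Real.rpow_pos_of_pos h1b _))
    (mul_pos (pow_two_pos_of_ne_zero hb') (Real.rpow_pos_of_pos h1a _))
end

section
/- Let 0 ≤ w < 1 and let (Σ₊, Σ_A, Σ_B, Σ_C, v₁, v₂, Ω₁, Ω₂) be a solution of the Bianchi type I two-fluid system with vᵢ(τ)² < 1 for all τ. Then for each i = 1,2 the energy flux Qᵢ = (1+w)Ωᵢvᵢ/(1+wvᵢ²) satisfies the linear differential equation Qᵢ' = -2(1 - q - Σ₊)Qᵢ along the solution. -/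
open Filter Topology

lemma Qflux_deriv {w : ℝ} (hw0 : 0 ≤ w) (hw1 : w < 1)
    (Ofun vfun : ℝ → ℝ) (q Sp : ℝ) (τ : ℝ) (hvlt : vfun τ ^ 2 < 1)
    (hO : HasDerivAt Ofun ((2 * q - 1 - 3 * w) * Ofun τ
      + (3 * w - 1 + 2 * Sp) * Qflux w (Ofun τ) (vfun τ) * vfun τ) τ)
    (hv : HasDerivAt vfun
      ((1 - w * vfun τ ^ 2)⁻¹ * (1 - vfun τ ^ 2) * (3 * w - 1 + 2 * Sp) * vfun τ) τ) :
    HasDerivAt (fun t => Qflux w (Ofun t) (vfun t))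
      (-2 * (1 - q - Sp) * Qflux w (Ofun τ) (vfun τ)) τ := by
  have hwv : w * vfun τ ^ 2 < 1 := by
    nlinarith [sq_nonneg (vfun τ)]
  have hden : 1 + w * vfun τ ^ 2 ≠ 0 := by positivity
  have hden2 : 1 - w * vfun τ ^ 2 ≠ 0 := by linarith
  set O' := (2 * q - 1 - 3 * w) * Ofun τ
      + (3 * w - 1 + 2 * Sp) * Qflux w (Ofun τ) (vfun τ) * vfun τ with hO'
  set v' := (1 - w * vfun τ ^ 2)⁻¹ * (1 - vfun τ ^ 2) * (3 * w - 1 + 2 * Sp) * vfun τ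
    with hv'
  have hnum : HasDerivAt (fun t => (1 + w) * Ofun t * vfun t)
      ((1 + w) * (O' * vfun τ + Ofun τ * v')) τ := by
    have := ((hO.const_mul (1 + w)).mul hv)
    refine this.congr_deriv ?_
    ring
  have hd : HasDerivAt (fun t => 1 + w * vfun t ^ 2) (w * (2 * vfun τ * v')) τ := by
    have := ((hv.pow 2).const_mul w).const_add 1
    refine this.congr_deriv ?_
    ring
  have := hnum.div hd hden
  unfold Qflux
  refine this.congr_deriv ?_
  rw [hO', hv']
  unfold Qflux
  field_simp
  ring

/-- Along any solution of the Bianchi type I two-fluid system with subluminal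
tilts, each energy flux Qᵢ satisfies Qᵢ' = -2(1 - q - Σ₊)Qᵢ. -/
theorem stmt_5 {w : ℝ} (hw0 : 0 ≤ w) (hw1 : w < 1) (S : BianchiSol w)
    (hv1 : ∀ τ : ℝ, S.v1 τ ^ 2 < 1) (hv2 : ∀ τ : ℝ, S.v2 τ ^ 2 < 1) :
    (∀ τ : ℝ, HasDerivAt (fun t => Qflux w (S.O1 t) (S.v1 t))
      (-2 * (1 - S.q τ - S.Sp τ) * Qflux w (S.O1 τ) (S.v1 τ)) τ) ∧
    (∀ τ : ℝ, HasDerivAt (fun t => Qflux w (S.O2 t) (S.v2 t))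
      (-2 * (1 - S.q τ - S.Sp τ) * Qflux w (S.O2 τ) (S.v2 τ)) τ) := by
  constructor
  · intro τ
    exact Qflux_deriv hw0 hw1 S.O1 S.v1 (S.q τ) (S.Sp τ) τ (hv1 τ) (S.hO1 τ) (S.hv1 τ)
  · intro τ
    exact Qflux_deriv hw0 hw1 S.O2 S.v2 (S.q τ) (S.Sp τ) τ (hv2 τ) (S.hO2 τ) (S.hv2 τ)
end

section
/- Let 0 ≤ w < 1 and let (Σ₊, Σ_A, Σ_B, Σ_C, v₁, v₂, Ω₁, Ω₂) be a solution of the Bianchi type I two-fluid system. Then the Gauss constraint quantity G = 1 - Σ² - Ω₁ - Ω₂ satisfies G' = 2qG along the solution; consequently, if G(τ₀) = 0 at some time τ₀ and q is bounded on compact intervals, then G(τ) = 0 for all τ, i.e. the Gauss constraint is preserved by the evolution. -/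
open Filter Topology

/-- The Gauss constraint quantity G = 1 - Σ² - Ω₁ - Ω₂ satisfies G' = 2qG
along any solution; hence if G vanishes at one time and q is bounded on compact
intervals, then G vanishes identically. -/
theorem stmt_7 {w : ℝ} (hw0 : 0 ≤ w) (hw1 : w < 1) (S : BianchiSol w) :
    (∀ τ : ℝ, HasDerivAt
      (fun t => 1 - Sig2 (S.Sp t) (S.SA t) (S.SB t) (S.SC t) - S.O1 t - S.O2 t)
      (2 * S.q τ * (1 - Sig2 (S.Sp τ) (S.SA τ) (S.SB τ) (S.SC τ) - S.O1 τ - S.O2 τ)) τ) ∧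
    (∀ τ₀ : ℝ, (1 - Sig2 (S.Sp τ₀) (S.SA τ₀) (S.SB τ₀) (S.SC τ₀) - S.O1 τ₀ - S.O2 τ₀ = 0) →
      (∀ a b : ℝ, ∃ M : ℝ, ∀ τ ∈ Set.Icc a b, |S.q τ| ≤ M) →
      ∀ τ : ℝ, 1 - Sig2 (S.Sp τ) (S.SA τ) (S.SB τ) (S.SC τ) - S.O1 τ - S.O2 τ = 0) := by

  classical
  set G : ℝ → ℝ := fun t =>
    1 - Sig2 (S.Sp t) (S.SA t) (S.SB t) (S.SC t) - S.O1 t - S.O2 t with hG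
  have key : ∀ τ : ℝ, HasDerivAt G (2 * S.q τ * G τ) τ := by
    intro τ
    have H : HasDerivAt G
        (0 - ((((2 : ℕ) * S.Sp τ ^ 1 * (-(2 - S.q τ) * S.Sp τ + 3 * S.SA τ ^ 2
            - Qflux w (S.O1 τ) (S.v1 τ) * S.v1 τ - Qflux w (S.O2 τ) (S.v2 τ) * S.v2 τ)
          + (2 : ℕ) * S.SA τ ^ 1 * (-(2 - S.q τ + 3 * S.Sp τ + Real.sqrt 3 * S.SB τ) * S.SA τ))
          + (2 : ℕ) * S.SB τ ^ 1 * (-(2 - S.q τ) * S.SB τ + Real.sqrt 3 * S.SA τ ^ 2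
            - 2 * Real.sqrt 3 * S.SC τ ^ 2))
          + (2 : ℕ) * S.SC τ ^ 1 * (-(2 - S.q τ - 2 * Real.sqrt 3 * S.SB τ) * S.SC τ))
          - ((2 * S.q τ - 1 - 3 * w) * S.O1 τ
            + (3 * w - 1 + 2 * S.Sp τ) * Qflux w (S.O1 τ) (S.v1 τ) * S.v1 τ)
          - ((2 * S.q τ - 1 - 3 * w) * S.O2 τ
            + (3 * w - 1 + 2 * S.Sp τ) * Qflux w (S.O2 τ) (S.v2 τ) * S.v2 τ)) τ := by
      have h1 := ((((S.hSp τ).pow 2).add ((S.hSA τ).pow 2)).add ((S.hSB τ).pow 2)).add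
        ((S.hSC τ).pow 2)
      have h2 := (((hasDerivAt_const τ (1 : ℝ)).sub h1).sub (S.hO1 τ)).sub (S.hO2 τ)
      exact h2
    convert H using 1
    simp only [hG, S.hq, decel, Pres, Sig2]
    push_cast
    ring
  refine ⟨key, ?_⟩
  intro τ₀ h0 hb τ
  set a : ℝ := min τ τ₀ - 1 with ha
  set b : ℝ := max τ τ₀ + 1 with hbdef
  obtain ⟨M, hM⟩ := hb a b
  set v : ℝ → ℝ → ℝ := fun t x => if t ∈ Set.Icc a b then 2 * S.q t * x else 0 with hvdef
  set K : NNReal := Real.toNNReal (2 * M) with hK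
  have hKle : ∀ t ∈ Set.Icc a b, |2 * S.q t| ≤ (K : ℝ) := by
    intro t ht
    have h1 := hM t ht
    have h2 : (K : ℝ) = max (2 * M) 0 := Real.coe_toNNReal' _
    rw [abs_mul, h2]
    have : (0:ℝ) ≤ |S.q t| := abs_nonneg _
    have h3 : |(2:ℝ)| = 2 := by norm_num
    rw [h3]
    nlinarith [le_max_left (2*M) (0:ℝ)]
  have hv : ∀ t, LipschitzOnWith K (v t) Set.univ := by
    intro t
    apply LipschitzWith.lipschitzOnWith
    by_cases ht : t ∈ Set.Icc a b
    · apply LipschitzWith.of_dist_le_mul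
      intro x y
      simp only [hvdef, if_pos ht]
      rw [Real.dist_eq, Real.dist_eq, ← mul_sub, abs_mul]
      exact mul_le_mul_of_nonneg_right (hKle t ht) (abs_nonneg _)
    · apply LipschitzWith.of_dist_le_mul
      intro x y
      simp only [hvdef, if_neg ht]
      simp only [Real.dist_eq, sub_self, abs_zero]
      positivity
  have hτ₀ : τ₀ ∈ Set.Ioo a b := by
    constructor
    · have := min_le_right τ τ₀; simp only [ha]; linarith
    · have := le_max_right τ τ₀; simp only [hbdef]; linarith
  have hτ : τ ∈ Set.Icc a b := by
    constructor
    · have := min_le_left τ τ₀; simp only [ha]; linarith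
    · have := le_max_left τ τ₀; simp only [hbdef]; linarith
  have heq : Set.EqOn G (fun _ => (0:ℝ)) (Set.Icc a b) := by
    apply ODE_solution_unique_of_mem_Icc (v := v) (s := fun _ => Set.univ) (fun t _ => hv t) hτ₀
    · exact fun t _ => (key t).continuousAt.continuousWithinAt
    · intro t ht
      simp only [hvdef]
      split_ifs with h
      · exact key t
      · exact absurd (Set.Ioo_subset_Icc_self ht) h
    · exact fun _ _ => trivial
    · exact continuousOn_const
    · intro t ht
      have : v t 0 = 0 := by simp [hvdef]
      rw [this]
      exact hasDerivAt_const t 0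
    · exact fun _ _ => trivial
    · exact h0
  exact heq hτ
end

section
/- Along any solution of the projected Kasner system, the quantity Σ² = Σ₊² + Σ_A² + Σ_B² + Σ_C² is constant: d/dτ(Σ₊² + Σ_A² + Σ_B² + Σ_C²) = 0. In particular, if Σ²(τ₀) = 1 at some time τ₀ then Σ²(τ) = 1 for all τ. -/
open Filter Topology

/-- A solution of the projected Kasner system. -/
structure KasnerSol where
  Sp : ℝ → ℝ
  SA : ℝ → ℝ
  SB : ℝ → ℝ
  SC : ℝ → ℝ
  hSp : ∀ τ : ℝ, HasDerivAt Sp (3 * SA τ ^ 2) τ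
  hSA : ∀ τ : ℝ, HasDerivAt SA (-(3 * Sp τ + Real.sqrt 3 * SB τ) * SA τ) τ
  hSB : ∀ τ : ℝ, HasDerivAt SB (Real.sqrt 3 * SA τ ^ 2 - 2 * Real.sqrt 3 * SC τ ^ 2) τ
  hSC : ∀ τ : ℝ, HasDerivAt SC (2 * Real.sqrt 3 * SB τ * SC τ) τ

/-- Along any solution of the projected Kasner system, Σ² = Σ₊² + Σ_A² + Σ_B² + Σ_C²
is constant; in particular if Σ² = 1 at some time then Σ² = 1 for all times. -/
theorem stmt_9 (K : KasnerSol) :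
    (∀ τ : ℝ, HasDerivAt
      (fun t => K.Sp t ^ 2 + K.SA t ^ 2 + K.SB t ^ 2 + K.SC t ^ 2) 0 τ) ∧
    (∀ τ₀ : ℝ, K.Sp τ₀ ^ 2 + K.SA τ₀ ^ 2 + K.SB τ₀ ^ 2 + K.SC τ₀ ^ 2 = 1 →
      ∀ τ : ℝ, K.Sp τ ^ 2 + K.SA τ ^ 2 + K.SB τ ^ 2 + K.SC τ ^ 2 = 1) := by
  have hderiv : ∀ τ : ℝ, HasDerivAt
      (fun t => K.Sp t ^ 2 + K.SA t ^ 2 + K.SB t ^ 2 + K.SC t ^ 2) 0 τ := by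
    intro τ
    have h := ((((K.hSp τ).fun_pow 2).fun_add ((K.hSA τ).fun_pow 2)).fun_add ((K.hSB τ).fun_pow 2)).fun_add
      ((K.hSC τ).fun_pow 2)
    refine h.congr_deriv ?_
    ring
  refine ⟨hderiv, fun τ₀ h1 τ => ?_⟩
  have hconst : ∀ t : ℝ, (K.Sp t ^ 2 + K.SA t ^ 2 + K.SB t ^ 2 + K.SC t ^ 2)
      = (K.Sp τ₀ ^ 2 + K.SA τ₀ ^ 2 + K.SB τ₀ ^ 2 + K.SC τ₀ ^ 2) := by
    have := is_const_of_deriv_eq_zero (f := fun t =>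
        K.Sp t ^ 2 + K.SA t ^ 2 + K.SB t ^ 2 + K.SC t ^ 2)
      (fun t => (hderiv t).differentiableAt) (fun t => (hderiv t).deriv)
    exact fun t => this t τ₀
  rw [hconst τ, h1]
end

section
/- Let (Σ₊, Σ_A, Σ_B, Σ_C) be a solution of the projected Kasner system defined on all of ℝ with Σ₊² + Σ_A² + Σ_B² + Σ_C² = 1 for all τ. Then Σ₊ is nondecreasing, Σ₊(τ) converges to finite limits as τ → ∞ and as τ → -∞, and Σ_A(τ) → 0 both as τ → ∞ and as τ → -∞. -/
open Filter Topology

/-- On the unit sphere Σ² = 1, along any solution of the projected Kasner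
system, Σ₊ is nondecreasing, converges to finite limits as τ → ±∞, and
Σ_A → 0 in both time directions. -/
theorem stmt_10 (K : KasnerSol)
    (hnorm : ∀ τ : ℝ, K.Sp τ ^ 2 + K.SA τ ^ 2 + K.SB τ ^ 2 + K.SC τ ^ 2 = 1) :
    Monotone K.Sp ∧
    (∃ L : ℝ, Tendsto K.Sp atTop (𝓝 L)) ∧
    (∃ L : ℝ, Tendsto K.Sp atBot (𝓝 L)) ∧
    Tendsto K.SA atTop (𝓝 0) ∧ Tendsto K.SA atBot (𝓝 0) := by
  have hsqrt3 : Real.sqrt 3 ≤ 2 := by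
    nlinarith [Real.sq_sqrt (show (0:ℝ) ≤ 3 by norm_num), Real.sqrt_nonneg 3]
  have hsqrt3' : (0:ℝ) ≤ Real.sqrt 3 := Real.sqrt_nonneg 3
  have hbSp : ∀ τ, -1 ≤ K.Sp τ ∧ K.Sp τ ≤ 1 := by
    intro τ
    constructor <;>
      nlinarith [hnorm τ, sq_nonneg (K.SA τ), sq_nonneg (K.SB τ), sq_nonneg (K.SC τ),
        sq_nonneg (K.Sp τ + 1), sq_nonneg (K.Sp τ - 1)]
  have hbSB : ∀ τ, -1 ≤ K.SB τ ∧ K.SB τ ≤ 1 := by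
    intro τ
    constructor <;>
      nlinarith [hnorm τ, sq_nonneg (K.SA τ), sq_nonneg (K.Sp τ), sq_nonneg (K.SC τ),
        sq_nonneg (K.SB τ + 1), sq_nonneg (K.SB τ - 1)]
  -- derivative of u = SA^2
  have hu : ∀ τ, HasDerivAt (fun t => K.SA t ^ 2)
      (-(2 * (3 * K.Sp τ + Real.sqrt 3 * K.SB τ)) * K.SA τ ^ 2) τ := by
    intro τ
    have h := (K.hSA τ).fun_pow 2
    exact h.congr_deriv (by norm_num; ring)
  -- monotonicity of Sp
  have hmono : Monotone K.Sp := by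
    apply monotone_of_deriv_nonneg (fun τ => (K.hSp τ).differentiableAt)
    intro τ
    rw [(K.hSp τ).deriv]
    positivity
  -- exp derivative helpers
  have hexp1 : ∀ s : ℝ, HasDerivAt (fun t : ℝ => Real.exp (10 * t)) (10 * Real.exp (10 * s)) s := by
    intro s
    have h := ((hasDerivAt_id s).const_mul (10:ℝ)).exp
    convert h using 1
    simp [id_eq]
    simp only [id]
    ring
  have hexp2 : ∀ s : ℝ, HasDerivAt (fun t : ℝ => Real.exp (-(10 * t))) (-10 * Real.exp (-(10 * s))) s := by
    intro s
    have h := (((hasDerivAt_id s).const_mul (10:ℝ)).neg).exp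
    convert h using 1
    simp [id_eq]
    simp only [id, Pi.neg_apply]
    ring
  -- v(t) = SA^2 * exp(10 t) is monotone
  have hv : ∀ τ, HasDerivAt (fun t => K.SA t ^ 2 * Real.exp (10 * t))
      ((-(2 * (3 * K.Sp τ + Real.sqrt 3 * K.SB τ)) * K.SA τ ^ 2) * Real.exp (10 * τ)
        + K.SA τ ^ 2 * (10 * Real.exp (10 * τ))) τ :=
    fun τ => (hu τ).mul (hexp1 τ)
  have hvmono : Monotone (fun t => K.SA t ^ 2 * Real.exp (10 * t)) := by
    apply monotone_of_deriv_nonneg (fun τ => (hv τ).differentiableAt)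
    intro τ
    rw [(hv τ).deriv]
    have key : 2 * (3 * K.Sp τ + Real.sqrt 3 * K.SB τ) ≤ 10 := by
      nlinarith [(hbSp τ).2, (hbSB τ).2, (hbSB τ).1, hsqrt3, hsqrt3']
    nlinarith [mul_nonneg (sq_nonneg (K.SA τ)) (Real.exp_pos (10 * τ)).le, key,
      sq_nonneg (K.SA τ), (Real.exp_pos (10 * τ)).le]
  -- w(t) = SA^2 * exp(-10 t) is antitone
  have hw : ∀ τ, HasDerivAt (fun t => K.SA t ^ 2 * Real.exp (-(10 * t)))
      ((-(2 * (3 * K.Sp τ + Real.sqrt 3 * K.SB τ)) * K.SA τ ^ 2) * Real.exp (-(10 * τ))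
        + K.SA τ ^ 2 * (-10 * Real.exp (-(10 * τ)))) τ :=
    fun τ => (hu τ).mul (hexp2 τ)
  have hwanti : Antitone (fun t => K.SA t ^ 2 * Real.exp (-(10 * t))) := by
    apply antitone_of_deriv_nonpos (fun τ => (hw τ).differentiableAt)
    intro τ
    rw [(hw τ).deriv]
    have key : -10 ≤ 2 * (3 * K.Sp τ + Real.sqrt 3 * K.SB τ) := by
      nlinarith [(hbSp τ).1, (hbSB τ).2, (hbSB τ).1, hsqrt3, hsqrt3']
    nlinarith [mul_nonneg (sq_nonneg (K.SA τ)) (Real.exp_pos (-(10 * τ))).le, key,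
      sq_nonneg (K.SA τ), (Real.exp_pos (-(10 * τ))).le]
  -- key inequality at +∞ : c * SA τ ^ 2 ≤ Sp (τ+1) - Sp τ
  have key1 : ∀ τ : ℝ, 3 / 10 * (1 - Real.exp (-10)) * K.SA τ ^ 2 ≤ K.Sp (τ + 1) - K.Sp τ := by
    intro τ
    set a : ℝ := 3 / 10 * (K.SA τ ^ 2 * Real.exp (10 * τ)) with ha
    have hψ : ∀ s : ℝ, HasDerivAt (fun s => K.Sp s + a * Real.exp (-(10 * s)))
        (3 * K.SA s ^ 2 + a * (-10 * Real.exp (-(10 * s)))) s :=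
      fun s => (K.hSp s).add ((hexp2 s).const_mul a)
    have hψmono : MonotoneOn (fun s => K.Sp s + a * Real.exp (-(10 * s))) (Set.Ici τ) := by
      apply monotoneOn_of_deriv_nonneg (convex_Ici τ)
      · exact fun s _ => ((hψ s).differentiableAt).continuousAt.continuousWithinAt
      · exact fun s _ => ((hψ s).differentiableAt).differentiableWithinAt
      · intro x hx
        rw [interior_Ici] at hx
        rw [(hψ x).deriv]
        have hv' := hvmono (le_of_lt hx)
        have h2 := mul_le_mul_of_nonneg_right hv' (Real.exp_pos (-(10 * x))).le
        simp only [] at h2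
        have h3 : K.SA x ^ 2 * Real.exp (10 * x) * Real.exp (-(10 * x)) = K.SA x ^ 2 := by
          rw [mul_assoc, ← Real.exp_add]
          norm_num
        rw [ha]
        nlinarith [h2, h3]
    have hle := hψmono (Set.self_mem_Ici) (by simp : (τ + 1) ∈ Set.Ici τ) (by linarith)
    simp only [ha] at hle
    have e1 : K.SA τ ^ 2 * Real.exp (10 * τ) * Real.exp (-(10 * τ)) = K.SA τ ^ 2 := by
      rw [mul_assoc, ← Real.exp_add]
      norm_num
    have e2 : Real.exp (-(10 * (τ + 1))) = Real.exp (-(10 * τ)) * Real.exp (-10) := by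
      rw [← Real.exp_add]; ring_nf
    have e1' := congrArg (· * Real.exp (-10)) e1
    rw [e2] at hle
    nlinarith [hle, e1, e1']
  -- key inequality at -∞ : c * SA τ ^ 2 ≤ Sp τ - Sp (τ-1)
  have key2 : ∀ τ : ℝ, 3 / 10 * (1 - Real.exp (-10)) * K.SA τ ^ 2 ≤ K.Sp τ - K.Sp (τ - 1) := by
    intro τ
    set a : ℝ := 3 / 10 * (K.SA τ ^ 2 * Real.exp (-(10 * τ))) with ha
    have hψ : ∀ s : ℝ, HasDerivAt (fun s => K.Sp s - a * Real.exp (10 * s))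
        (3 * K.SA s ^ 2 - a * (10 * Real.exp (10 * s))) s :=
      fun s => (K.hSp s).sub ((hexp1 s).const_mul a)
    have hψmono : MonotoneOn (fun s => K.Sp s - a * Real.exp (10 * s)) (Set.Iic τ) := by
      apply monotoneOn_of_deriv_nonneg (convex_Iic τ)
      · exact fun s _ => ((hψ s).differentiableAt).continuousAt.continuousWithinAt
      · exact fun s _ => ((hψ s).differentiableAt).differentiableWithinAt
      · intro x hx
        rw [interior_Iic] at hx
        rw [(hψ x).deriv]
        have hw' := hwanti (le_of_lt hx)
        have h2 := mul_le_mul_of_nonneg_right hw' (Real.exp_pos (10 * x)).le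
        simp only [] at h2
        have h3 : K.SA x ^ 2 * Real.exp (-(10 * x)) * Real.exp (10 * x) = K.SA x ^ 2 := by
          rw [mul_assoc, ← Real.exp_add]
          norm_num
        rw [ha]
        nlinarith [h2, h3]
    have hle := hψmono (by simp : (τ - 1) ∈ Set.Iic τ) (Set.self_mem_Iic) (by linarith)
    simp only [ha] at hle
    have e1 : K.SA τ ^ 2 * Real.exp (-(10 * τ)) * Real.exp (10 * τ) = K.SA τ ^ 2 := by
      rw [mul_assoc, ← Real.exp_add]
      norm_num
    have e2 : Real.exp (10 * (τ - 1)) = Real.exp (10 * τ) * Real.exp (-10) := by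
      rw [← Real.exp_add]; ring_nf
    have e1' := congrArg (· * Real.exp (-10)) e1
    rw [e2] at hle
    nlinarith [hle, e1, e1']
  -- limits of Sp
  have hbb : BddAbove (Set.range K.Sp) := ⟨1, by rintro x ⟨τ, rfl⟩; exact (hbSp τ).2⟩
  have hbl : BddBelow (Set.range K.Sp) := ⟨-1, by rintro x ⟨τ, rfl⟩; exact (hbSp τ).1⟩
  have hT : Tendsto K.Sp atTop (𝓝 (⨆ τ, K.Sp τ)) := tendsto_atTop_ciSup hmono hbb
  have hB : Tendsto K.Sp atBot (𝓝 (⨅ τ, K.Sp τ)) := tendsto_atBot_ciInf hmono hbl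
  -- positivity of the constant
  have hcpos : 0 < 3 / 10 * (1 - Real.exp (-10)) := by
    have h1 : Real.exp (-10) < 1 := by
      rw [Real.exp_lt_one_iff]
      norm_num
    nlinarith
  -- SA^2 → 0 at +∞
  have hdiffT : Tendsto (fun τ => K.Sp (τ + 1) - K.Sp τ) atTop (𝓝 0) := by
    have h1 : Tendsto (fun τ : ℝ => K.Sp (τ + 1)) atTop (𝓝 (⨆ τ, K.Sp τ)) :=
      hT.comp (tendsto_atTop_add_const_right atTop 1 tendsto_id)
    simpa using h1.sub hT
  have hu0T : Tendsto (fun τ => K.SA τ ^ 2) atTop (𝓝 0) := by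
    apply squeeze_zero (fun τ => sq_nonneg _)
      (g := fun τ => (K.Sp (τ + 1) - K.Sp τ) / (3 / 10 * (1 - Real.exp (-10))))
    · intro τ
      rw [le_div_iff₀ hcpos]
      nlinarith [key1 τ]
    · simpa using hdiffT.div_const (3 / 10 * (1 - Real.exp (-10)))
  -- SA^2 → 0 at -∞
  have hdiffB : Tendsto (fun τ => K.Sp τ - K.Sp (τ - 1)) atBot (𝓝 0) := by
    have h1 : Tendsto (fun τ : ℝ => K.Sp (τ - 1)) atBot (𝓝 (⨅ τ, K.Sp τ)) := by
      have := tendsto_atBot_add_const_right atBot (-1 : ℝ) (tendsto_id (α := ℝ))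
      exact hB.comp (by simpa [sub_eq_add_neg] using this)
    simpa using hB.sub h1
  have hu0B : Tendsto (fun τ => K.SA τ ^ 2) atBot (𝓝 0) := by
    apply squeeze_zero (fun τ => sq_nonneg _)
      (g := fun τ => (K.Sp τ - K.Sp (τ - 1)) / (3 / 10 * (1 - Real.exp (-10))))
    · intro τ
      rw [le_div_iff₀ hcpos]
      nlinarith [key2 τ]
    · simpa using hdiffB.div_const (3 / 10 * (1 - Real.exp (-10)))
  -- conclude SA → 0
  have hSA_T : Tendsto K.SA atTop (𝓝 0) := by
    rw [tendsto_zero_iff_norm_tendsto_zero]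
    have h := (Real.continuous_sqrt.tendsto' 0 0 Real.sqrt_zero).comp hu0T
    have h' : Tendsto (fun τ => Real.sqrt (K.SA τ ^ 2)) atTop (𝓝 0) := h
    simpa [Real.sqrt_sq_eq_abs, Real.norm_eq_abs] using h'
  have hSA_B : Tendsto K.SA atBot (𝓝 0) := by
    rw [tendsto_zero_iff_norm_tendsto_zero]
    have h := (Real.continuous_sqrt.tendsto' 0 0 Real.sqrt_zero).comp hu0B
    have h' : Tendsto (fun τ => Real.sqrt (K.SA τ ^ 2)) atBot (𝓝 0) := h
    simpa [Real.sqrt_sq_eq_abs, Real.norm_eq_abs] using h'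
  exact ⟨hmono, ⟨_, hT⟩, ⟨_, hB⟩, hSA_T, hSA_B⟩
end

section
/- Let 0 ≤ w < 1 and λ ∈ ℝ with λ ≠ 0, and let v : ℝ → ℝ be a solution of v' = (1 - wv²)⁻¹(1 - v²)·λ·v with v(0) ∈ (0, 1). If λ < 0 then v(τ) → 0 as τ → ∞ and v(τ) → 1 as τ → -∞; if λ > 0 then v(τ) → 1 as τ → ∞ and v(τ) → 0 as τ → -∞. (In the Bianchi type I model, λ = 3w - 1 + 2Σ̂₊ on a Kasner fixed point with shear value Σ̂₊.) -/
open Filter Topology Set NNReal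

section tiltAux

variable {w lam : ℝ}

private lemma tilt_wr (hw0 : 0 ≤ w) (hw1 : w < 1) :
    ∃ r : ℝ, 1 < r ∧ w * r ^ 2 < 1 := by
  set s := Real.sqrt w with hs
  have hs0 : 0 ≤ s := Real.sqrt_nonneg w
  have hsq : s ^ 2 = w := Real.sq_sqrt hw0
  have hs1 : s < 1 := by nlinarith
  have hd : (0:ℝ) < 1 + s := by linarith
  refine ⟨2 / (1 + s), ?_, ?_⟩
  · rw [lt_div_iff₀ hd]; linarith
  · have h1 : w * (2 / (1 + s)) ^ 2 = (2 * s / (1 + s)) ^ 2 := by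
      rw [← hsq]; field_simp
    have h2 : 2 * s / (1 + s) < 1 := (div_lt_one hd).2 (by linarith)
    have h3 : 0 ≤ 2 * s / (1 + s) := div_nonneg (by linarith) hd.le
    rw [h1]; nlinarith

private lemma tilt_lip (hw0 : 0 ≤ w) {r : ℝ} (hr1 : 1 < r) (hr2 : w * r ^ 2 < 1) :
    ∃ K : ℝ≥0, LipschitzOnWith K
      (fun x : ℝ => (1 - w * x ^ 2)⁻¹ * (1 - x ^ 2) * lam * x) (Icc (-r) r) := by
  have hden : ∀ x ∈ Icc (-r : ℝ) r, 0 < 1 - w * x ^ 2 := by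
    intro x hx
    have hx2 : x ^ 2 ≤ r ^ 2 := sq_le_sq' hx.1 hx.2
    nlinarith [mul_le_mul_of_nonneg_left hx2 hw0]
  set G' : ℝ → ℝ := fun x =>
    ((-(2 * x) * lam * x + (1 - x ^ 2) * lam) * (1 - w * x ^ 2) -
      (1 - x ^ 2) * lam * x * (-(w * (2 * x)))) / (1 - w * x ^ 2) ^ 2 with hG'
  have hfun : (fun x : ℝ => (1 - w * x ^ 2)⁻¹ * (1 - x ^ 2) * lam * x) =
      fun x : ℝ => ((1 - x ^ 2) * lam * x) / (1 - w * x ^ 2) := by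
    funext y; rw [div_eq_mul_inv]; ring
  have hG : ∀ x ∈ Icc (-r : ℝ) r,
      HasDerivAt (fun x : ℝ => (1 - w * x ^ 2)⁻¹ * (1 - x ^ 2) * lam * x) (G' x) x := by
    intro x hx
    have hne := (hden x hx).ne'
    have h1 : HasDerivAt (fun x : ℝ => (1 - x ^ 2) * lam) (-(2 * x) * lam) x := by
      have := ((hasDerivAt_pow 2 x).const_sub 1).mul_const lam
      exact this.congr_deriv (by push_cast; ring)
    have hN : HasDerivAt (fun x : ℝ => (1 - x ^ 2) * lam * x)
        (-(2 * x) * lam * x + (1 - x ^ 2) * lam) x := by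
      have := h1.mul (hasDerivAt_id x)
      exact this.congr_deriv (by simp)
    have hD : HasDerivAt (fun x : ℝ => 1 - w * x ^ 2) (-(w * (2 * x))) x := by
      have := ((hasDerivAt_pow 2 x).const_mul w).const_sub 1
      exact this.congr_deriv (by push_cast; ring)
    rw [hfun]
    have := hN.div hD hne
    exact this
  have hc : ContinuousOn G' (Icc (-r) r) := by
    apply ContinuousOn.div
    · fun_prop
    · fun_prop
    · intro x hx; exact pow_ne_zero 2 (hden x hx).ne'
  obtain ⟨C, hC⟩ := isCompact_Icc.exists_bound_of_continuousOn hc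
  refine ⟨C.toNNReal, (convex_Icc _ _).lipschitzOnWith_of_nnnorm_hasDerivWithin_le
    (fun x hx => (hG x hx).hasDerivWithinAt) ?_⟩
  intro x hx
  simp only [← NNReal.coe_le_coe, coe_nnnorm, Real.coe_toNNReal']
  exact (hC x hx).trans (le_max_left _ _)

private lemma tilt_ne (hw0 : 0 ≤ w) (hw1 : w < 1) (v : ℝ → ℝ)
    (hv : ∀ τ : ℝ, HasDerivAt v ((1 - w * v τ ^ 2)⁻¹ * (1 - v τ ^ 2) * lam * v τ) τ)
    {c : ℝ} (hc : c = 0 ∨ c = 1) (hvc : v 0 ≠ c) : ∀ τ, v τ ≠ c := by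
  obtain ⟨r, hr1, hr2⟩ := tilt_wr hw0 hw1
  obtain ⟨K, hK⟩ := tilt_lip (lam := lam) hw0 hr1 hr2
  set G : ℝ → ℝ := fun x => (1 - w * x ^ 2)⁻¹ * (1 - x ^ 2) * lam * x with hGdef
  have hGc : G c = 0 := by rcases hc with rfl | rfl <;> simp [hGdef]
  have hcont : Continuous v := continuous_iff_continuousAt.2 fun τ => (hv τ).continuousAt
  have hcr : c ∈ Ioo (-r) r := by rcases hc with rfl | rfl <;> constructor <;> linarith
  have hZo : IsOpen {τ | v τ = c} := by
    rw [isOpen_iff_mem_nhds]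
    intro τ0 hτ0
    have hτ0' : v τ0 = c := hτ0
    have hmem : ∀ᶠ t in 𝓝 τ0, v t ∈ Ioo (-r) r := by
      apply hcont.continuousAt.eventually_mem
      rw [hτ0']; exact isOpen_Ioo.mem_nhds hcr
    have heq := ODE_solution_unique_of_eventually (v := fun _ x => G x)
      (s := fun _ => Icc (-r) r) (K := K) (f := v) (g := fun _ => c) (t₀ := τ0)
      (Eventually.of_forall fun _ => hK)
      (hmem.mono fun t ht => ⟨hv t, Ioo_subset_Icc_self ht⟩)
      (Eventually.of_forall fun t =>
        ⟨by simpa [hGc] using hasDerivAt_const t c, Ioo_subset_Icc_self hcr⟩)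
      hτ0'
    exact heq
  have hZc : IsClosed {τ | v τ = c} := isClosed_eq hcont continuous_const
  rcases isClopen_iff.mp ⟨hZc, hZo⟩ with h | h
  · intro τ hτ
    exact absurd hτ (eq_empty_iff_forall_notMem.mp h τ)
  · exact absurd (h.ge (mem_univ 0)) hvc

private lemma tilt_mem (hw0 : 0 ≤ w) (hw1 : w < 1) (v : ℝ → ℝ)
    (hv : ∀ τ : ℝ, HasDerivAt v ((1 - w * v τ ^ 2)⁻¹ * (1 - v τ ^ 2) * lam * v τ) τ)
    (h0 : 0 < v 0) (h1 : v 0 < 1) : ∀ τ, 0 < v τ ∧ v τ < 1 := by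
  have hne0 := tilt_ne (lam := lam) hw0 hw1 v hv (Or.inl rfl) (ne_of_gt h0)
  have hne1 := tilt_ne (lam := lam) hw0 hw1 v hv (Or.inr rfl) (ne_of_lt h1)
  have hcont : Continuous v := continuous_iff_continuousAt.2 fun τ => (hv τ).continuousAt
  intro τ
  constructor
  · by_contra h
    push_neg at h
    have h0' : (0:ℝ) ∈ uIcc (v τ) (v 0) := mem_uIcc.2 (Or.inl ⟨h, h0.le⟩)
    obtain ⟨s, _, hs⟩ := intermediate_value_uIcc hcont.continuousOn h0'
    exact hne0 s hs
  · by_contra h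
    push_neg at h
    have h1' : (1:ℝ) ∈ uIcc (v τ) (v 0) := mem_uIcc.2 (Or.inr ⟨h1.le, h⟩)
    obtain ⟨s, _, hs⟩ := intermediate_value_uIcc hcont.continuousOn h1'
    exact hne1 s hs

private lemma tilt_pos (hw0 : 0 ≤ w) (hw1 : w < 1) (hlam : 0 < lam) (v : ℝ → ℝ)
    (hv : ∀ τ : ℝ, HasDerivAt v ((1 - w * v τ ^ 2)⁻¹ * (1 - v τ ^ 2) * lam * v τ) τ)
    (h0 : 0 < v 0) (h1 : v 0 < 1) :
    Tendsto v atTop (𝓝 1) ∧ Tendsto v atBot (𝓝 0) := by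
  have hmem := tilt_mem hw0 hw1 v hv h0 h1
  set G : ℝ → ℝ := fun x => (1 - w * x ^ 2)⁻¹ * (1 - x ^ 2) * lam * x with hGdef
  have hGpos : ∀ x : ℝ, 0 < x → x < 1 → 0 < G x := by
    intro x hx0 hx1
    have hwx : w * x ^ 2 < 1 := by nlinarith
    have hinv : 0 < (1 - w * x ^ 2)⁻¹ := inv_pos.2 (by linarith)
    have hx2 : 0 < 1 - x ^ 2 := by nlinarith
    exact mul_pos (mul_pos (mul_pos hinv hx2) hlam) hx0
  have hGcont : ∀ a b : ℝ, 0 < a → b < 1 → ContinuousOn G (Icc a b) := by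
    intro a b ha hb
    apply ContinuousOn.mul (ContinuousOn.mul (ContinuousOn.mul ?_ (by fun_prop))
      continuousOn_const) (by fun_prop)
    apply ContinuousOn.inv₀ (by fun_prop)
    intro x hx
    have : w * x ^ 2 < 1 := by
      rcases le_or_gt (x ^ 2) 1 with h | h
      · nlinarith
      · nlinarith [hx.1, hx.2, sq_nonneg x]
    linarith
  have hdpos : ∀ τ, 0 < deriv v τ := fun τ => by
    rw [(hv τ).deriv]; exact hGpos _ (hmem τ).1 (hmem τ).2
  have hmono : StrictMono v := strictMono_of_deriv_pos hdpos
  have hbddA : BddAbove (range v) := ⟨1, by rintro y ⟨τ, rfl⟩; exact (hmem τ).2.le⟩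
  have hbddB : BddBelow (range v) := ⟨0, by rintro y ⟨τ, rfl⟩; exact (hmem τ).1.le⟩
  set L := ⨆ τ, v τ with hL
  set M := ⨅ τ, v τ with hM
  have htop : Tendsto v atTop (𝓝 L) := tendsto_atTop_ciSup hmono.monotone hbddA
  have hbot : Tendsto v atBot (𝓝 M) := tendsto_atBot_ciInf hmono.monotone hbddB
  have hvL : ∀ τ, v τ ≤ L := fun τ => le_ciSup hbddA τ
  have hMv : ∀ τ, M ≤ v τ := fun τ => ciInf_le hbddB τ
  have hL1 : L ≤ 1 := ciSup_le fun τ => (hmem τ).2.le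
  have hM0 : 0 ≤ M := le_ciInf fun τ => (hmem τ).1.le
  have hLv0 : v 0 ≤ L := hvL 0
  have hMv0 : M ≤ v 0 := hMv 0
  have hLeq : L = 1 := by
    by_contra hne
    have hL1' : L < 1 := lt_of_le_of_ne hL1 hne
    obtain ⟨x₀, hx₀, hminOn⟩ := isCompact_Icc.exists_isMinOn (nonempty_Icc.2 hLv0)
      (hGcont (v 0) L h0 hL1')
    set ε := G x₀ with hε
    have hεpos : 0 < ε := hGpos x₀ (lt_of_lt_of_le h0 hx₀.1) (lt_of_le_of_lt hx₀.2 hL1')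
    have hGe : ∀ τ, 0 ≤ τ → ε ≤ G (v τ) := fun τ hτ =>
      isMinOn_iff.mp hminOn _ ⟨hmono.monotone hτ, hvL τ⟩
    set u : ℝ → ℝ := fun τ => v τ - ε * τ with hudef
    have hu : ∀ τ, HasDerivAt u (G (v τ) - ε) τ := fun τ =>
      (hv τ).sub (by simpa using (hasDerivAt_id τ).const_mul ε)
    have humono : MonotoneOn u (Ici 0) := by
      apply monotoneOn_of_deriv_nonneg (convex_Ici 0)
        (Continuous.continuousOn (continuous_iff_continuousAt.2 fun τ => (hu τ).continuousAt))
        (fun τ _ => (hu τ).differentiableAt.differentiableWithinAt)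
      intro τ hτ
      rw [interior_Ici] at hτ
      rw [(hu τ).deriv]
      have := hGe τ (le_of_lt hτ)
      linarith
    have hτ₁0 : (0:ℝ) ≤ (L - v 0) / ε + 1 := by
      have : 0 ≤ (L - v 0) / ε := div_nonneg (by linarith) hεpos.le
      linarith
    have hkey := humono self_mem_Ici (mem_Ici.2 hτ₁0) hτ₁0
    have hmul : ε * ((L - v 0) / ε + 1) = (L - v 0) + ε := by
      field_simp
    have hvb := hvL ((L - v 0) / ε + 1)
    simp only [hudef] at hkey
    rw [hmul] at hkey
    simp only [mul_zero, sub_zero] at hkey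
    linarith
  have hMeq : M = 0 := by
    by_contra hne
    have hM0' : 0 < M := lt_of_le_of_ne hM0 (Ne.symm hne)
    obtain ⟨x₀, hx₀, hminOn⟩ := isCompact_Icc.exists_isMinOn (nonempty_Icc.2 hMv0)
      (hGcont M (v 0) hM0' h1)
    set ε := G x₀ with hε
    have hεpos : 0 < ε := hGpos x₀ (lt_of_lt_of_le hM0' hx₀.1) (lt_of_le_of_lt hx₀.2 h1)
    have hGe : ∀ τ, τ ≤ 0 → ε ≤ G (v τ) := fun τ hτ =>
      isMinOn_iff.mp hminOn _ ⟨hMv τ, hmono.monotone hτ⟩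
    set u : ℝ → ℝ := fun τ => v τ - ε * τ with hudef
    have hu : ∀ τ, HasDerivAt u (G (v τ) - ε) τ := fun τ =>
      (hv τ).sub (by simpa using (hasDerivAt_id τ).const_mul ε)
    have humono : MonotoneOn u (Iic 0) := by
      apply monotoneOn_of_deriv_nonneg (convex_Iic 0)
        (Continuous.continuousOn (continuous_iff_continuousAt.2 fun τ => (hu τ).continuousAt))
        (fun τ _ => (hu τ).differentiableAt.differentiableWithinAt)
      intro τ hτ
      rw [interior_Iic] at hτ
      rw [(hu τ).deriv]
      have := hGe τ (le_of_lt hτ)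
      linarith
    have hτ₁0 : -(v 0) / ε - 1 ≤ (0:ℝ) := by
      have : 0 ≤ v 0 / ε := div_nonneg h0.le hεpos.le
      rw [neg_div]
      linarith
    have hkey := humono (mem_Iic.2 hτ₁0) self_mem_Iic hτ₁0
    have hmul : ε * (-(v 0) / ε - 1) = -(v 0) - ε := by
      field_simp
    have hvb := (hmem (-(v 0) / ε - 1)).1
    simp only [hudef] at hkey
    rw [hmul] at hkey
    simp only [mul_zero, sub_zero] at hkey
    linarith
  exact ⟨hLeq ▸ htop, hMeq ▸ hbot⟩

end tiltAux

/-- For the autonomous tilt equation v' = (1 - wv²)⁻¹(1 - v²)λv with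
v(0) ∈ (0,1): if λ < 0 then v → 0 as τ → ∞ and v → 1 as τ → -∞; if λ > 0
then v → 1 as τ → ∞ and v → 0 as τ → -∞. -/
theorem stmt_12 {w lam : ℝ} (hw0 : 0 ≤ w) (hw1 : w < 1) (hlam : lam ≠ 0)
    (v : ℝ → ℝ)
    (hv : ∀ τ : ℝ, HasDerivAt v ((1 - w * v τ ^ 2)⁻¹ * (1 - v τ ^ 2) * lam * v τ) τ)
    (h0 : 0 < v 0) (h1 : v 0 < 1) :
    (lam < 0 → Tendsto v atTop (𝓝 0) ∧ Tendsto v atBot (𝓝 1)) ∧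
    (0 < lam → Tendsto v atTop (𝓝 1) ∧ Tendsto v atBot (𝓝 0)) := by
  constructor
  · intro hneg
    set u : ℝ → ℝ := fun τ => v (-τ) with hu
    have hu' : ∀ τ : ℝ, HasDerivAt u ((1 - w * u τ ^ 2)⁻¹ * (1 - u τ ^ 2) * (-lam) * u τ) τ := by
      intro τ
      have h2 : HasDerivAt u
          (((1 - w * v (-τ) ^ 2)⁻¹ * (1 - v (-τ) ^ 2) * lam * v (-τ)) * (-1)) τ :=
        (hv (-τ)).comp τ (hasDerivAt_neg τ)
      convert h2 using 1
      simp only [hu]; ring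
    have h0u : 0 < u 0 := by simpa [hu] using h0
    have h1u : u 0 < 1 := by simpa [hu] using h1
    obtain ⟨htop, hbot⟩ := tilt_pos hw0 hw1 (neg_pos.2 hneg) u hu' h0u h1u
    constructor
    · have := hbot.comp tendsto_neg_atTop_atBot
      simpa [hu, Function.comp_def] using this
    · have := htop.comp tendsto_neg_atBot_atTop
      simpa [hu, Function.comp_def] using this
  · intro hpos
    exact tilt_pos hw0 hw1 hpos v hv h0 h1
end

section
/- For every w with 0 ≤ w < 1, every sign ε ∈ {+1, -1}, and every pair of tilt values v₁, v₂ ∈ (-1, 1), the Kasner-surface point KS given by (Σ₊, Σ_A, Σ_B, Σ_C, v₁, v₂, Ω₁, Ω₂) = ((1-3w)/2, 0, ε·√(1 - ((1-3w)/2)²), 0, v₁, v₂, 0, 0) is an equilibrium point of the Bianchi type I two-fluid system (all eight right-hand sides of the evolution equations vanish there; in particular the tilt equations vanish because 3w - 1 + 2Σ₊ = 0), and it satisfies both the Gauss constraint and the Codazzi constraint. Thus there are two surfaces of Kasner equilibrium points with arbitrary tilts. -/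
open Filter Topology

/-- A point of `ℝ⁸` is an equilibrium point of the Bianchi type I two-fluid
system if the right-hand sides of all eight evolution equations vanish at it. -/
noncomputable def IsEquilibrium (w Sp SA SB SC v1 v2 O1 O2 : ℝ) : Prop :=
  -(2 - decel w Sp SA SB SC v1 v2 O1 O2) * Sp + 3 * SA ^ 2
      - Qflux w O1 v1 * v1 - Qflux w O2 v2 * v2 = 0 ∧
  -(2 - decel w Sp SA SB SC v1 v2 O1 O2 + 3 * Sp + Real.sqrt 3 * SB) * SA = 0 ∧
  -(2 - decel w Sp SA SB SC v1 v2 O1 O2) * SB + Real.sqrt 3 * SA ^ 2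
      - 2 * Real.sqrt 3 * SC ^ 2 = 0 ∧
  -(2 - decel w Sp SA SB SC v1 v2 O1 O2 - 2 * Real.sqrt 3 * SB) * SC = 0 ∧
  (1 - w * v1 ^ 2)⁻¹ * (1 - v1 ^ 2) * (3 * w - 1 + 2 * Sp) * v1 = 0 ∧
  (1 - w * v2 ^ 2)⁻¹ * (1 - v2 ^ 2) * (3 * w - 1 + 2 * Sp) * v2 = 0 ∧
  (2 * decel w Sp SA SB SC v1 v2 O1 O2 - 1 - 3 * w) * O1
      + (3 * w - 1 + 2 * Sp) * Qflux w O1 v1 * v1 = 0 ∧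
  (2 * decel w Sp SA SB SC v1 v2 O1 O2 - 1 - 3 * w) * O2
      + (3 * w - 1 + 2 * Sp) * Qflux w O2 v2 * v2 = 0

/-- The Kasner-surface points KS with Σ₊ = (1-3w)/2, Σ_B = ±√(1 - Σ₊²) and
arbitrary tilts v₁, v₂ ∈ (-1,1) are equilibrium points of the Bianchi type I
two-fluid system (in particular the tilt equations vanish because
3w - 1 + 2Σ₊ = 0), satisfying the Gauss and Codazzi constraints. -/
theorem stmt_18 {w ε v1 v2 : ℝ} (hw0 : 0 ≤ w) (hw1 : w < 1)
    (hε : ε = 1 ∨ ε = -1)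
    (hv1 : -1 < v1 ∧ v1 < 1) (hv2 : -1 < v2 ∧ v2 < 1) :
    IsEquilibrium w ((1 - 3 * w) / 2) 0
      (ε * Real.sqrt (1 - ((1 - 3 * w) / 2) ^ 2)) 0 v1 v2 0 0 ∧
    3 * w - 1 + 2 * ((1 - 3 * w) / 2) = 0 ∧
    1 - Sig2 ((1 - 3 * w) / 2) 0
      (ε * Real.sqrt (1 - ((1 - 3 * w) / 2) ^ 2)) 0 - 0 - 0 = 0 ∧
    Qflux w 0 v1 + Qflux w 0 v2 = 0 := by
  have hQ : ∀ v : ℝ, Qflux w 0 v = 0 := by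
    intro v; simp [Qflux]
  have hP : ∀ v : ℝ, Pres w 0 v = 0 := by
    intro v; simp [Pres, hQ]
  have hSp2 : ((1 - 3 * w) / 2) ^ 2 ≤ 1 := by nlinarith
  have hsq : (Real.sqrt (1 - ((1 - 3 * w) / 2) ^ 2)) ^ 2
      = 1 - ((1 - 3 * w) / 2) ^ 2 := Real.sq_sqrt (by linarith)
  have hε2 : ε ^ 2 = 1 := by rcases hε with h | h <;> simp [h]
  have hSig : Sig2 ((1 - 3 * w) / 2) 0
      (ε * Real.sqrt (1 - ((1 - 3 * w) / 2) ^ 2)) 0 = 1 := by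
    simp only [Sig2, mul_pow, hsq, hε2]
    ring
  have hq : decel w ((1 - 3 * w) / 2) 0
      (ε * Real.sqrt (1 - ((1 - 3 * w) / 2) ^ 2)) 0 v1 v2 0 0 = 2 := by
    simp [decel, hSig, hP]
  have h0 : 3 * w - 1 + 2 * ((1 - 3 * w) / 2) = 0 := by ring
  refine ⟨⟨?_, ?_, ?_, ?_, ?_, ?_, ?_, ?_⟩, h0, by rw [hSig]; ring, by simp [hQ]⟩
  · rw [hq, hQ, hQ]; ring
  · rw [hq]; ring
  · rw [hq]; ring
  · rw [hq]; ring
  · rw [h0]; ring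
  · rw [h0]; ring
  · rw [hq, hQ]; ring
  · rw [hq, hQ]; ring
end

section
/- Let 1/3 < w < 1 and let v₁ be a real number with (3w-1)/(5w+1) < v₁ < 1. Then the LRS point given by Σ₊ = -(3w-1)/2, Σ_A = Σ_B = Σ_C = 0, v₂ = -(3w-1)/((5w+1)v₁), Ω₁ = (3/4)·(1-w)(5w+1)(3w-1)(1 + w·v₁²) / ((1+w)·[(5w+1)v₁² + (3w-1)]), Ω₂ = (3/4)·(1-w)·[(5w+1)²v₁² + w(3w-1)²] / ((1+w)·[(5w+1)v₁² + (3w-1)]) is an equilibrium point of the Bianchi type I two-fluid system (all eight right-hand sides of the evolution equations vanish there), and it satisfies both the Gauss constraint 1 - Σ² - Ω₁ - Ω₂ = 0 and the Codazzi constraint Q₁ + Q₂ = 0. Thus for each such w there is a one-parameter line LRSL of anisotropic equilibrium points with both fluids tilted. -/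
open Filter Topology

set_option maxHeartbeats 2000000 in
/-- For 1/3 < w < 1, the LRS points parameterized by v₁ ∈ ((3w-1)/(5w+1), 1)
form a line LRSL of anisotropic equilibrium points of the Bianchi type I
two-fluid system with both fluids tilted, satisfying the Gauss and Codazzi
constraints. -/
theorem stmt_19 {w v1 : ℝ} (hw0 : 1 / 3 < w) (hw1 : w < 1)
    (hv1l : (3 * w - 1) / (5 * w + 1) < v1) (hv1u : v1 < 1) :
    IsEquilibrium w (-(3 * w - 1) / 2) 0 0 0 v1 (-(3 * w - 1) / ((5 * w + 1) * v1))
      ((3 / 4) * ((1 - w) * (5 * w + 1) * (3 * w - 1) * (1 + w * v1 ^ 2)) /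
        ((1 + w) * ((5 * w + 1) * v1 ^ 2 + (3 * w - 1))))
      ((3 / 4) * ((1 - w) * ((5 * w + 1) ^ 2 * v1 ^ 2 + w * (3 * w - 1) ^ 2)) /
        ((1 + w) * ((5 * w + 1) * v1 ^ 2 + (3 * w - 1)))) ∧
    1 - Sig2 (-(3 * w - 1) / 2) 0 0 0 -
      ((3 / 4) * ((1 - w) * (5 * w + 1) * (3 * w - 1) * (1 + w * v1 ^ 2)) /
        ((1 + w) * ((5 * w + 1) * v1 ^ 2 + (3 * w - 1)))) -
      ((3 / 4) * ((1 - w) * ((5 * w + 1) ^ 2 * v1 ^ 2 + w * (3 * w - 1) ^ 2)) /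
        ((1 + w) * ((5 * w + 1) * v1 ^ 2 + (3 * w - 1)))) = 0 ∧
    Qflux w ((3 / 4) * ((1 - w) * (5 * w + 1) * (3 * w - 1) * (1 + w * v1 ^ 2)) /
        ((1 + w) * ((5 * w + 1) * v1 ^ 2 + (3 * w - 1)))) v1 +
    Qflux w ((3 / 4) * ((1 - w) * ((5 * w + 1) ^ 2 * v1 ^ 2 + w * (3 * w - 1) ^ 2)) /
        ((1 + w) * ((5 * w + 1) * v1 ^ 2 + (3 * w - 1))))
      (-(3 * w - 1) / ((5 * w + 1) * v1)) = 0 := by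
  have hw : 0 < w := by linarith
  have h3 : 0 < 3 * w - 1 := by linarith
  have h5 : 0 < 5 * w + 1 := by linarith
  have hv1 : 0 < v1 := lt_trans (div_pos h3 h5) hv1l
  have hv1' : v1 ≠ 0 := ne_of_gt hv1
  have h5' : 5 * w + 1 ≠ 0 := ne_of_gt h5
  have h1w : (1:ℝ) + w ≠ 0 := by positivity
  have hd : (5 * w + 1) * v1 ^ 2 + (3 * w - 1) ≠ 0 := by positivity
  have hd1 : (1:ℝ) + w * v1 ^ 2 ≠ 0 := by positivity
  have hd2 : (1:ℝ) + w * (-(3 * w - 1) / ((5 * w + 1) * v1)) ^ 2 ≠ 0 := by positivity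
  have hSp : 3 * w - 1 + 2 * (-(3 * w - 1) / 2) = 0 := by ring
  have hq : decel w (-(3 * w - 1) / 2) 0 0 0 v1 (-(3 * w - 1) / ((5 * w + 1) * v1))
      ((3 / 4) * ((1 - w) * (5 * w + 1) * (3 * w - 1) * (1 + w * v1 ^ 2)) /
        ((1 + w) * ((5 * w + 1) * v1 ^ 2 + (3 * w - 1))))
      ((3 / 4) * ((1 - w) * ((5 * w + 1) ^ 2 * v1 ^ 2 + w * (3 * w - 1) ^ 2)) /
        ((1 + w) * ((5 * w + 1) * v1 ^ 2 + (3 * w - 1)))) = (1 + 3 * w) / 2 := by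
    unfold decel Sig2 Pres Qflux
    field_simp
    ring
  refine ⟨⟨?_, ?_, ?_, ?_, ?_, ?_, ?_, ?_⟩, ?_, ?_⟩
  · rw [hq]; unfold Qflux; field_simp; ring
  · exact mul_zero _
  · ring
  · exact mul_zero _
  · rw [hSp]; try ring
  · rw [hSp]; try ring
  · rw [hq, hSp]; try ring
  · rw [hq, hSp]; try ring
  · unfold Sig2; field_simp; ring
  · unfold Qflux; field_simp; ring
end
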